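/- arXiv:2508.15170 — 3 statements merged into one kernel-verified Lean document; each statement's English description precedes it below -/
import Mathlib

section
/- Let A(t) + A(t)† ≤ −2ηI with η > 0, ‖b(t)‖ ≤ B for all t, and let ε > 0. If T ≥ (1/η)·log(4‖u₀‖/(ε·‖u(T)‖)) and T₀ ≥ (1/η)·log(4B/(η·ε·‖u(T)‖)), then the normalized states satisfy ‖ u(T)/‖u(T)‖ − w(T)/‖w(T)‖ ‖ ≤ ε, where w(T) = ∫_{T−T₀}^{T} Φ(T,t)b(t)dt. -/
open scoped ComplexInnerProductSpace
open Matrix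

namespace TSA

variable {N : ℕ}

lemma hasDerivAt_normSq {x : ℝ → EuclideanSpace ℂ (Fin N)} {x' : EuclideanSpace ℂ (Fin N)} {t : ℝ}
    (hx : HasDerivAt x x' t) :
    HasDerivAt (fun s => ‖x s‖ ^ 2) (2 * (⟪x t, x'⟫).re) t := by
  have h := hx.inner ℂ hx
  have h2 := Complex.reCLM.hasFDerivAt.comp_hasDerivAt t h
  have : (Complex.reCLM (⟪x t, x'⟫ + ⟪x', x t⟫) : ℝ) = 2 * (⟪x t, x'⟫).re := by
    simp only [Complex.reCLM_apply, Complex.add_re, ← inner_conj_symm (x t) x',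
      Complex.conj_re]
    ring
  have e : (fun s => ‖x s‖ ^ 2) = (Complex.reCLM ∘ fun t => ⟪x t, x t⟫) := by
    funext s; rw [← inner_self_eq_norm_sq (𝕜 := ℂ)]; rfl
  rw [e, ← this]; exact h2

end TSA

namespace TSA

lemma contraction {T η : ℝ} (hη : 0 < η)
    (A : ℝ → Matrix (Fin N) (Fin N) ℂ)
    (hA : ∀ t ∈ Set.Icc (0:ℝ) T, ∀ v : EuclideanSpace ℂ (Fin N),
      (⟪v, Matrix.toEuclideanCLM (𝕜 := ℂ) (A t) v⟫).re ≤ -η * ‖v‖ ^ 2)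
    {d : ℝ → EuclideanSpace ℂ (Fin N)} {s₁ s₂ : ℝ}
    (hs₁ : 0 ≤ s₁) (hs : s₁ ≤ s₂) (hs₂ : s₂ ≤ T)
    (hcont : ContinuousOn d (Set.Icc s₁ s₂))
    (hd : ∀ s ∈ Set.Ioo s₁ s₂, HasDerivAt d (Matrix.toEuclideanCLM (𝕜 := ℂ) (A s) (d s)) s) :
    ‖d s₂‖ ≤ Real.exp (-η * (s₂ - s₁)) * ‖d s₁‖ := by
  set g : ℝ → ℝ := fun s => Real.exp (2 * η * s) * ‖d s‖ ^ 2 with hg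
  have hderiv : ∀ s ∈ Set.Ioo s₁ s₂, HasDerivAt g
      (2 * η * Real.exp (2 * η * s) * ‖d s‖ ^ 2 +
        Real.exp (2 * η * s) * (2 * (⟪d s, Matrix.toEuclideanCLM (𝕜 := ℂ) (A s) (d s)⟫).re)) s := by
    intro s hs'
    have he : HasDerivAt (fun s => Real.exp (2 * η * s)) (2 * η * Real.exp (2 * η * s)) s := by
      have := (Real.hasDerivAt_exp (2 * η * s)).comp s
        ((hasDerivAt_id s).const_mul (2*η))
      simp only [Function.comp_def, id] at this
      exact this.congr_deriv (by ring)
    exact he.mul (hasDerivAt_normSq (hd s hs'))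
  have hanti : AntitoneOn g (Set.Icc s₁ s₂) := by
    apply antitoneOn_of_deriv_nonpos (convex_Icc s₁ s₂)
    · exact ((Real.continuous_exp.comp (continuous_const.mul continuous_id)).continuousOn).mul
        ((hcont.norm).pow 2)
    · intro s hs'
      rw [interior_Icc] at hs'
      exact (hderiv s hs').differentiableAt.differentiableWithinAt
    · intro s hs'
      rw [interior_Icc] at hs'
      rw [(hderiv s hs').deriv]
      have h1 := hA s ⟨le_trans hs₁ (le_of_lt hs'.1), le_trans (le_of_lt hs'.2) hs₂⟩ (d s)
      have he : (0:ℝ) < Real.exp (2 * η * s) := Real.exp_pos _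
      nlinarith [he, h1]
  have hmain := hanti (Set.left_mem_Icc.2 hs) (Set.right_mem_Icc.2 hs) hs
  -- g s₂ ≤ g s₁
  have h2 : ‖d s₂‖ ^ 2 ≤ (Real.exp (-η * (s₂ - s₁)) * ‖d s₁‖) ^ 2 := by
    have he1 : (0:ℝ) < Real.exp (2 * η * s₂) := Real.exp_pos _
    rw [hg] at hmain
    simp only at hmain
    have hexp : (Real.exp (-η * (s₂ - s₁))) ^ 2 = Real.exp (2 * η * s₁) / Real.exp (2 * η * s₂) := by
      rw [← Real.exp_sub, ← Real.exp_nat_mul]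
      norm_num
      ring_nf
    rw [mul_pow, hexp, div_mul_eq_mul_div, le_div_iff₀ he1]
    nlinarith [hmain]
  calc ‖d s₂‖ = √(‖d s₂‖ ^ 2) := by rw [Real.sqrt_sq (norm_nonneg _)]
  _ ≤ √((Real.exp (-η * (s₂ - s₁)) * ‖d s₁‖) ^ 2) := Real.sqrt_le_sqrt h2
  _ = Real.exp (-η * (s₂ - s₁)) * ‖d s₁‖ := Real.sqrt_sq (by positivity)

end TSA

namespace TSA

lemma diss_re {T η : ℝ} (A : ℝ → Matrix (Fin N) (Fin N) ℂ)
    (hdiss : ∀ t ∈ Set.Icc (0:ℝ) T, ∀ v : EuclideanSpace ℂ (Fin N),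
      (⟪v, Matrix.toEuclideanLin (A t + (A t)ᴴ) v⟫).re ≤ -2 * η * ‖v‖ ^ 2) :
    ∀ t ∈ Set.Icc (0:ℝ) T, ∀ v : EuclideanSpace ℂ (Fin N),
      (⟪v, Matrix.toEuclideanCLM (𝕜 := ℂ) (A t) v⟫).re ≤ -η * ‖v‖ ^ 2 := by
  intro t ht v
  have h := hdiss t ht v
  rw [map_add] at h
  have h2 : Matrix.toEuclideanLin (A t)ᴴ = LinearMap.adjoint (Matrix.toEuclideanLin (A t)) :=
    Matrix.toEuclideanLin_conjTranspose_eq_adjoint _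
  rw [h2] at h
  have h3 : ⟪v, LinearMap.adjoint (Matrix.toEuclideanLin (A t)) v⟫
      = ⟪Matrix.toEuclideanLin (A t) v, v⟫ := LinearMap.adjoint_inner_right _ _ _
  rw [LinearMap.add_apply, inner_add_right, h3, ← inner_conj_symm v (Matrix.toEuclideanLin (A t) v)] at h
  have hc : Matrix.toEuclideanCLM (𝕜 := ℂ) (A t) v = Matrix.toEuclideanLin (A t) v := by
    rw [← Matrix.coe_toEuclideanCLM_eq_toEuclideanLin]; rfl
  rw [hc]
  simp only [Complex.add_re, Complex.conj_re] at h
  have h5 : (⟪Matrix.toEuclideanLin (A t) v, v⟫).re = (⟪v, Matrix.toEuclideanLin (A t) v⟫).re := by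
    rw [← inner_conj_symm v (Matrix.toEuclideanLin (A t) v)]
    rw [Complex.conj_re]
  rw [h5] at h
  linarith

lemma unique {T η : ℝ} (hη : 0 < η)
    (A : ℝ → Matrix (Fin N) (Fin N) ℂ)
    (hA : ∀ t ∈ Set.Icc (0:ℝ) T, ∀ v : EuclideanSpace ℂ (Fin N),
      (⟪v, Matrix.toEuclideanCLM (𝕜 := ℂ) (A t) v⟫).re ≤ -η * ‖v‖ ^ 2)
    {c : ℝ → EuclideanSpace ℂ (Fin N)}
    {x y : ℝ → EuclideanSpace ℂ (Fin N)} {s₁ s₂ : ℝ}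
    (hs₁ : 0 ≤ s₁) (hs : s₁ ≤ s₂) (hs₂ : s₂ ≤ T)
    (hxc : ContinuousOn x (Set.Icc s₁ s₂)) (hyc : ContinuousOn y (Set.Icc s₁ s₂))
    (hx : ∀ s ∈ Set.Ioo s₁ s₂,
      HasDerivAt x (Matrix.toEuclideanCLM (𝕜 := ℂ) (A s) (x s) + c s) s)
    (hy : ∀ s ∈ Set.Ioo s₁ s₂,
      HasDerivAt y (Matrix.toEuclideanCLM (𝕜 := ℂ) (A s) (y s) + c s) s)
    (h0 : x s₁ = y s₁) : x s₂ = y s₂ := by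
  have hd : ∀ s ∈ Set.Ioo s₁ s₂,
      HasDerivAt (fun s => x s - y s)
        (Matrix.toEuclideanCLM (𝕜 := ℂ) (A s) (x s - y s)) s := by
    intro s hs'
    have := (hx s hs').sub (hy s hs')
    rw [map_sub]; exact this.congr_deriv (by abel)
  have := contraction hη A hA (d := fun s => x s - y s) hs₁ hs hs₂ (hxc.sub hyc) hd
  rw [show x s₁ - y s₁ = 0 by rw [h0, sub_self]] at this
  simp only [norm_zero, mul_zero] at this
  have h4 : x s₂ - y s₂ = 0 := by
    rw [← norm_le_zero_iff]; exact this
  rwa [sub_eq_zero] at h4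

end TSA

namespace TSA

lemma cocycle {T η : ℝ} (hη : 0 < η)
    (A : ℝ → Matrix (Fin N) (Fin N) ℂ)
    (hA : ∀ t ∈ Set.Icc (0:ℝ) T, ∀ v : EuclideanSpace ℂ (Fin N),
      (⟪v, Matrix.toEuclideanCLM (𝕜 := ℂ) (A t) v⟫).re ≤ -η * ‖v‖ ^ 2)
    (Φ : ℝ → ℝ → Matrix (Fin N) (Fin N) ℂ)
    (hΦid : ∀ t, Φ t t = 1)
    (hΦ : ∀ t ∈ Set.Icc (0:ℝ) T, ∀ v : EuclideanSpace ℂ (Fin N), ∀ s ∈ Set.Icc (0:ℝ) T,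
      HasDerivAt (fun s' => Matrix.toEuclideanCLM (𝕜 := ℂ) (Φ s' t) v)
        (Matrix.toEuclideanCLM (𝕜 := ℂ) (A s)
          (Matrix.toEuclideanCLM (𝕜 := ℂ) (Φ s t) v)) s)
    (hT : 0 ≤ T) :
    ∀ s ∈ Set.Icc (0:ℝ) T, ∀ t ∈ Set.Icc (0:ℝ) T, Φ s 0 * Φ 0 t = Φ s t := by
  intro s hs t ht
  have key : ∀ v : EuclideanSpace ℂ (Fin N),
      Matrix.toEuclideanCLM (𝕜 := ℂ) (Φ s 0) (Matrix.toEuclideanCLM (𝕜 := ℂ) (Φ 0 t) v)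
        = Matrix.toEuclideanCLM (𝕜 := ℂ) (Φ s t) v := by
    intro v
    set v' := Matrix.toEuclideanCLM (𝕜 := ℂ) (Φ 0 t) v with hv'
    have h0T : (0:ℝ) ∈ Set.Icc (0:ℝ) T := ⟨le_refl _, hT⟩
    apply unique hη A hA (c := fun _ => 0)
      (x := fun s' => Matrix.toEuclideanCLM (𝕜 := ℂ) (Φ s' 0) v')
      (y := fun s' => Matrix.toEuclideanCLM (𝕜 := ℂ) (Φ s' t) v)
      (le_refl (0:ℝ)) hs.1 hs.2
    · intro s' hs'
      exact ((hΦ 0 h0T v' s' (Set.Icc_subset_Icc_right hs.2 hs')).continuousAt).continuousWithinAt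
    · intro s' hs'
      exact ((hΦ t ht v s' (Set.Icc_subset_Icc_right hs.2 hs')).continuousAt).continuousWithinAt
    · intro s' hs'
      have := hΦ 0 h0T v' s' (Set.mem_Icc.2 ⟨le_of_lt hs'.1, le_trans (le_of_lt hs'.2) hs.2⟩)
      simpa using this
    · intro s' hs'
      have := hΦ t ht v s' (Set.mem_Icc.2 ⟨le_of_lt hs'.1, le_trans (le_of_lt hs'.2) hs.2⟩)
      simpa using this
    · rw [hv', hΦid 0]
      simp
  have : Matrix.toEuclideanCLM (𝕜 := ℂ) (Φ s 0 * Φ 0 t)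
      = Matrix.toEuclideanCLM (𝕜 := ℂ) (Φ s t) := by
    rw [_root_.map_mul]
    exact ContinuousLinearMap.ext key
  exact (Matrix.toEuclideanCLM (n := Fin N) (𝕜 := ℂ)).injective this

end TSA

namespace TSA

lemma opDeriv {T : ℝ}
    (A : ℝ → Matrix (Fin N) (Fin N) ℂ)
    (Φ : ℝ → ℝ → Matrix (Fin N) (Fin N) ℂ)
    (hΦ : ∀ v : EuclideanSpace ℂ (Fin N), ∀ s ∈ Set.Icc (0:ℝ) T,
      HasDerivAt (fun s' => Matrix.toEuclideanCLM (𝕜 := ℂ) (Φ s' 0) v)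
        (Matrix.toEuclideanCLM (𝕜 := ℂ) (A s)
          (Matrix.toEuclideanCLM (𝕜 := ℂ) (Φ s 0) v)) s) :
    ∀ s ∈ Set.Icc (0:ℝ) T,
      HasDerivAt (fun s' => Matrix.toEuclideanCLM (𝕜 := ℂ) (Φ s' 0))
        (Matrix.toEuclideanCLM (𝕜 := ℂ) (A s) ∘L Matrix.toEuclideanCLM (𝕜 := ℂ) (Φ s 0)) s := by
  intro s hs
  set bb := EuclideanSpace.basisFun (Fin N) ℂ with hbb
  set Ξ : (Fin N → EuclideanSpace ℂ (Fin N)) ≃ₗ[ℂ]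
      (EuclideanSpace ℂ (Fin N) →L[ℂ] EuclideanSpace ℂ (Fin N)) :=
    (bb.toBasis.constr ℂ).trans LinearMap.toContinuousLinearMap with hΞ
  set Ξc := Ξ.toContinuousLinearEquiv with hΞc
  have hcomp : ∀ (M : EuclideanSpace ℂ (Fin N) →L[ℂ] EuclideanSpace ℂ (Fin N)),
      Ξc (fun j => M (bb j)) = M := by
    intro M
    apply ContinuousLinearMap.coe_injective
    apply Module.Basis.ext bb.toBasis
    intro i
    have : (Ξc (fun j => M (bb j)) : _ →ₗ[ℂ] _) = bb.toBasis.constr ℂ (fun j => M (bb j)) := rfl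
    rw [this, Module.Basis.constr_basis]
    simp
  have hg : HasDerivAt (fun s' => (fun j => Matrix.toEuclideanCLM (𝕜 := ℂ) (Φ s' 0) (bb j)))
      (fun j => Matrix.toEuclideanCLM (𝕜 := ℂ) (A s)
        (Matrix.toEuclideanCLM (𝕜 := ℂ) (Φ s 0) (bb j))) s := by
    rw [hasDerivAt_pi]
    intro j
    exact hΦ (bb j) s hs
  have h2 := ((Ξc.toContinuousLinearMap).restrictScalars ℝ).hasFDerivAt.comp_hasDerivAt s hg
  simp only [ContinuousLinearMap.coe_restrictScalars', ContinuousLinearEquiv.coe_coe,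
    Function.comp] at h2
  have he1 : (fun s' => Ξc (fun j => Matrix.toEuclideanCLM (𝕜 := ℂ) (Φ s' 0) (bb j)))
      = fun s' => Matrix.toEuclideanCLM (𝕜 := ℂ) (Φ s' 0) := by
    funext s'
    exact hcomp _
  have he2 : Ξc (fun j => Matrix.toEuclideanCLM (𝕜 := ℂ) (A s)
        (Matrix.toEuclideanCLM (𝕜 := ℂ) (Φ s 0) (bb j)))
      = Matrix.toEuclideanCLM (𝕜 := ℂ) (A s) ∘L Matrix.toEuclideanCLM (𝕜 := ℂ) (Φ s 0) :=
    hcomp (Matrix.toEuclideanCLM (𝕜 := ℂ) (A s) ∘L Matrix.toEuclideanCLM (𝕜 := ℂ) (Φ s 0))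
  rw [← he1, ← he2]
  exact h2

end TSA

namespace TSA

lemma normalize_sub_le {F : Type*} [NormedAddCommGroup F] [NormedSpace ℝ F]
    (x y : F) (hx : x ≠ 0) (hy : y ≠ 0) :
    ‖‖x‖⁻¹ • x - ‖y‖⁻¹ • y‖ ≤ 2 * ‖x - y‖ / ‖x‖ := by
  have hx0 : (0:ℝ) < ‖x‖ := norm_pos_iff.2 hx
  have hy0 : (0:ℝ) < ‖y‖ := norm_pos_iff.2 hy
  have key : ‖x‖⁻¹ • x - ‖y‖⁻¹ • y = ‖x‖⁻¹ • (x - y) + (‖x‖⁻¹ - ‖y‖⁻¹) • y := by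
    rw [smul_sub, sub_smul]; abel
  rw [key]
  refine le_trans (norm_add_le _ _) ?_
  rw [norm_smul, norm_smul]
  have h1 : ‖(‖x‖⁻¹ : ℝ)‖ = ‖x‖⁻¹ := by
    rw [Real.norm_eq_abs, abs_of_pos (by positivity)]
  have heq : (‖x‖⁻¹ - ‖y‖⁻¹ : ℝ) = (‖y‖ - ‖x‖) / (‖x‖ * ‖y‖) := by field_simp
  have h2 : ‖(‖x‖⁻¹ - ‖y‖⁻¹ : ℝ)‖ * ‖y‖ ≤ ‖x - y‖ / ‖x‖ := by
    rw [Real.norm_eq_abs, heq, abs_div, abs_of_pos (mul_pos hx0 hy0)]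
    have h3 : |‖y‖ - ‖x‖| ≤ ‖x - y‖ := by
      rw [abs_sub_comm]; exact abs_norm_sub_norm_le x y
    rw [div_mul_eq_mul_div, div_le_div_iff₀ (mul_pos hx0 hy0) hx0]
    calc |‖y‖ - ‖x‖| * ‖y‖ * ‖x‖ ≤ ‖x - y‖ * ‖y‖ * ‖x‖ := by
          apply mul_le_mul_of_nonneg_right _ (le_of_lt hx0)
          exact mul_le_mul_of_nonneg_right h3 (le_of_lt hy0)
      _ = ‖x - y‖ * (‖x‖ * ‖y‖) := by ring
  rw [h1]
  have : ‖x‖⁻¹ * ‖x - y‖ = ‖x - y‖ / ‖x‖ := by ring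
  rw [this]
  have hfin : ‖x - y‖ / ‖x‖ + ‖x - y‖ / ‖x‖ = 2 * ‖x - y‖ / ‖x‖ := by ring
  linarith [h2]

end TSA


set_option maxHeartbeats 2000000 in
theorem truncated_state_accuracy {N : ℕ} (T T₀ η B ε : ℝ) (hη : 0 < η) (hε : 0 < ε)
    (hT₀0 : 0 ≤ T₀) (hT₀T : T₀ ≤ T)
    (A : ℝ → Matrix (Fin N) (Fin N) ℂ)
    (hdiss : ∀ t ∈ Set.Icc (0:ℝ) T, ∀ v : EuclideanSpace ℂ (Fin N),
      (⟪v, Matrix.toEuclideanLin (A t + (A t)ᴴ) v⟫).re ≤ -2 * η * ‖v‖ ^ 2)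
    (b : ℝ → EuclideanSpace ℂ (Fin N)) (hb : ContinuousOn b (Set.Icc 0 T))
    (hB : ∀ t ∈ Set.Icc (0:ℝ) T, ‖b t‖ ≤ B)
    (u₀ : EuclideanSpace ℂ (Fin N)) (u : ℝ → EuclideanSpace ℂ (Fin N)) (hu0 : u 0 = u₀)
    (hu : ∀ t ∈ Set.Icc (0:ℝ) T,
      HasDerivAt u (Matrix.toEuclideanCLM (𝕜 := ℂ) (A t) (u t) + b t) t)
    (Φ : ℝ → ℝ → Matrix (Fin N) (Fin N) ℂ)
    (hΦid : ∀ t, Φ t t = 1)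
    (hΦ : ∀ t ∈ Set.Icc (0:ℝ) T, ∀ v : EuclideanSpace ℂ (Fin N), ∀ s ∈ Set.Icc (0:ℝ) T,
      HasDerivAt (fun s' => Matrix.toEuclideanCLM (𝕜 := ℂ) (Φ s' t) v)
        (Matrix.toEuclideanCLM (𝕜 := ℂ) (A s)
          (Matrix.toEuclideanCLM (𝕜 := ℂ) (Φ s t) v)) s)
    (w : EuclideanSpace ℂ (Fin N))
    (hw : w = ∫ t in (T - T₀)..T, Matrix.toEuclideanCLM (𝕜 := ℂ) (Φ T t) (b t))
    (huT : u T ≠ 0) (hwne : w ≠ 0)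
    (hTlarge : (1 / η) * Real.log (4 * ‖u₀‖ / (ε * ‖u T‖)) ≤ T)
    (hT₀large : (1 / η) * Real.log (4 * B / (η * ε * ‖u T‖)) ≤ T₀) :
    ‖‖u T‖⁻¹ • u T - ‖w‖⁻¹ • w‖ ≤ ε := by
  have hT0 : (0:ℝ) ≤ T := le_trans hT₀0 hT₀T
  set a := T - T₀ with ha
  have ha0 : 0 ≤ a := by rw [ha]; linarith
  have haT : a ≤ T := by rw [ha]; linarith
  have h0I : (0:ℝ) ∈ Set.Icc (0:ℝ) T := ⟨le_refl _, hT0⟩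
  have hTI : T ∈ Set.Icc (0:ℝ) T := ⟨hT0, le_refl _⟩
  have haI : a ∈ Set.Icc (0:ℝ) T := ⟨ha0, haT⟩
  have hA := TSA.diss_re (η := η) A hdiss
  have hco := TSA.cocycle hη A hA Φ hΦid hΦ hT0
  set P : ℝ → (EuclideanSpace ℂ (Fin N) →L[ℂ] EuclideanSpace ℂ (Fin N)) :=
    fun s => Matrix.toEuclideanCLM (𝕜 := ℂ) (Φ s 0) with hP
  set Q : ℝ → (EuclideanSpace ℂ (Fin N) →L[ℂ] EuclideanSpace ℂ (Fin N)) :=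
    fun s => Matrix.toEuclideanCLM (𝕜 := ℂ) (Φ 0 s) with hQ
  have hPd : ∀ s ∈ Set.Icc (0:ℝ) T,
      HasDerivAt P (Matrix.toEuclideanCLM (𝕜 := ℂ) (A s) ∘L P s) s :=
    TSA.opDeriv A Φ (fun v s hs => hΦ 0 h0I v s hs)
  have hPc : ContinuousOn P (Set.Icc (0:ℝ) T) :=
    fun s hs => ((hPd s hs).continuousAt).continuousWithinAt
  have hQinv : ∀ τ ∈ Set.Icc (0:ℝ) T, P τ * Q τ = 1 ∧ Q τ * P τ = 1 := by
    intro τ hτ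
    have hm : Φ τ 0 * Φ 0 τ = 1 := by rw [hco τ hτ τ hτ, hΦid]
    constructor
    · rw [hP, hQ]
      rw [← _root_.map_mul, hm, _root_.map_one]
    · rw [hP, hQ]
      rw [← _root_.map_mul, mul_eq_one_comm.mp hm, _root_.map_one]
  have hQr : ∀ τ ∈ Set.Icc (0:ℝ) T, Q τ = Ring.inverse (P τ) := by
    intro τ hτ
    have hu1 := (hQinv τ hτ).1
    have hu2 := (hQinv τ hτ).2
    have : Ring.inverse ((⟨P τ, Q τ, hu1, hu2⟩ :
        (EuclideanSpace ℂ (Fin N) →L[ℂ] EuclideanSpace ℂ (Fin N))ˣ) :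
        EuclideanSpace ℂ (Fin N) →L[ℂ] EuclideanSpace ℂ (Fin N)) = Q τ :=
      Ring.inverse_unit _
    exact this.symm
  have hQc : ContinuousOn Q (Set.Icc (0:ℝ) T) := by
    intro τ hτ
    have h1 : ContinuousWithinAt (fun s => Ring.inverse (P s)) (Set.Icc (0:ℝ) T) τ := by
      have hunit : IsUnit (P τ) :=
        ⟨⟨P τ, Q τ, (hQinv τ hτ).1, (hQinv τ hτ).2⟩, rfl⟩
      obtain ⟨un, hun⟩ := hunit
      have h2 : ContinuousAt Ring.inverse (P τ) := by
        rw [← hun]; exact NormedRing.inverse_continuousAt un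
      exact h2.comp_continuousWithinAt (hPc τ hτ)
    exact h1.congr (fun s hs => (hQr s hs)) (hQr τ hτ)
  set r : ℝ → EuclideanSpace ℂ (Fin N) := fun τ => Q τ (b τ) with hr
  have hrc : ContinuousOn r (Set.Icc (0:ℝ) T) := hQc.clm_apply hb
  have hrint : ∀ s₁ s₂ : ℝ, s₁ ∈ Set.Icc (0:ℝ) T → s₂ ∈ Set.Icc (0:ℝ) T →
      IntervalIntegrable r MeasureTheory.volume s₁ s₂ := by
    intro s₁ s₂ h₁ h₂
    apply ContinuousOn.intervalIntegrable
    exact hrc.mono (Set.uIcc_subset_Icc h₁ h₂)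
  set m : ℝ → EuclideanSpace ℂ (Fin N) :=
    (fun t => u₀ + ∫ τ in (0:ℝ)..t, r τ) with hm
  have hmc : ContinuousOn m (Set.Icc (0:ℝ) T) := by
    apply ContinuousOn.add continuousOn_const
    have hi : MeasureTheory.IntegrableOn r (Set.uIcc (0:ℝ) T) MeasureTheory.volume := by
      rw [Set.uIcc_of_le hT0]
      exact hrc.integrableOn_compact isCompact_Icc
    have h2 := intervalIntegral.continuousOn_primitive_interval hi
    rwa [Set.uIcc_of_le hT0] at h2
  have hmd : ∀ t ∈ Set.Ioo (0:ℝ) T, HasDerivAt m (r t) t := by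
    intro t ht
    have hd2 : HasDerivAt (fun t => ∫ τ in (0:ℝ)..t, r τ) (r t) t := by
      apply intervalIntegral.integral_hasDerivAt_right
        (hrint 0 t h0I ⟨le_of_lt ht.1, le_of_lt ht.2⟩)
      · exact ContinuousAt.stronglyMeasurableAtFilter isOpen_Ioo
          (fun x hx => hrc.continuousAt (Icc_mem_nhds hx.1 hx.2)) t ht
      · exact hrc.continuousAt (Icc_mem_nhds ht.1 ht.2)
    simpa [hm] using hd2.const_add u₀
  set z : ℝ → EuclideanSpace ℂ (Fin N) := fun t => P t (m t) with hz
  have hzc : ContinuousOn z (Set.Icc (0:ℝ) T) := hPc.clm_apply hmc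
  set Rs : (EuclideanSpace ℂ (Fin N) →L[ℂ] EuclideanSpace ℂ (Fin N)) →L[ℝ]
      (EuclideanSpace ℂ (Fin N) →L[ℝ] EuclideanSpace ℂ (Fin N)) :=
    ContinuousLinearMap.restrictScalarsL ℂ (EuclideanSpace ℂ (Fin N))
      (EuclideanSpace ℂ (Fin N)) ℝ ℝ with hRs
  have hzd : ∀ t ∈ Set.Ioo (0:ℝ) T,
      HasDerivAt z (Matrix.toEuclideanCLM (𝕜 := ℂ) (A t) (z t) + b t) t := by
    intro t ht
    have htI : t ∈ Set.Icc (0:ℝ) T := ⟨le_of_lt ht.1, le_of_lt ht.2⟩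
    have hPrd : HasDerivAt (fun s => Rs (P s))
        (Rs (Matrix.toEuclideanCLM (𝕜 := ℂ) (A t) ∘L P t)) t :=
      Rs.hasFDerivAt.comp_hasDerivAt t (hPd t htI)
    have h1 := hPrd.clm_apply (hmd t ht)
    have h2 : P t (r t) = b t := by
      have h4 : (P t * Q t) (b t) = b t := by rw [(hQinv t htI).1]; rfl
      simpa [hr] using h4
    have h3 : Rs (P t) (r t) = b t := h2
    rw [h3] at h1
    exact h1
  have huzT : u T = z T := by
    apply TSA.unique hη A hA (c := b) (le_refl (0:ℝ)) hT0 (le_refl T)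
      (fun t ht => (hu t ht).continuousAt.continuousWithinAt) hzc
      (fun t ht => hu t ⟨le_of_lt ht.1, le_of_lt ht.2⟩) hzd
    rw [hu0, hz, hm]
    simp [hP, hΦid 0]
  have hsub1 : Set.uIcc a T ⊆ Set.Icc (0:ℝ) T := Set.uIcc_subset_Icc haI hTI
  have hsub0 : Set.uIcc (0:ℝ) a ⊆ Set.Icc (0:ℝ) T := Set.uIcc_subset_Icc h0I haI
  have hcongr : ∀ t ∈ Set.Icc (0:ℝ) T,
      Matrix.toEuclideanCLM (𝕜 := ℂ) (Φ T t) (b t) = P T (r t) := by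
    intro t htI
    rw [hr, hP]
    show Matrix.toEuclideanCLM (𝕜 := ℂ) (Φ T t) (b t)
      = Matrix.toEuclideanCLM (𝕜 := ℂ) (Φ T 0) (Matrix.toEuclideanCLM (𝕜 := ℂ) (Φ 0 t) (b t))
    rw [← hco T hTI t htI, _root_.map_mul]
    rfl
  have hwPT : w = P T (∫ τ in a..T, r τ) := by
    rw [hw, ← ContinuousLinearMap.intervalIntegral_comp_comm (P T) (hrint a T haI hTI)]
    exact intervalIntegral.integral_congr (fun t htu => hcongr t (hsub1 htu))
  have hsplit : (∫ τ in (0:ℝ)..a, r τ) + (∫ τ in a..T, r τ) = ∫ τ in (0:ℝ)..T, r τ :=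
    intervalIntegral.integral_add_adjacent_intervals (hrint 0 a h0I haI) (hrint a T haI hTI)
  have huTw : u T - w = P T u₀ + P T (∫ τ in (0:ℝ)..a, r τ) := by
    rw [huzT, hwPT, hz, hm]
    simp only [← hsplit, map_add]
    abel
  -- bound 1
  have hbd1 : ‖P T u₀‖ ≤ Real.exp (-η * T) * ‖u₀‖ := by
    have hc := TSA.contraction hη A hA (d := fun s => Matrix.toEuclideanCLM (𝕜 := ℂ) (Φ s 0) u₀)
      (le_refl (0:ℝ)) hT0 (le_refl T)
      (fun s hs => (hΦ 0 h0I u₀ s hs).continuousAt.continuousWithinAt)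
      (fun s hs => hΦ 0 h0I u₀ s ⟨le_of_lt hs.1, le_of_lt hs.2⟩)
    have hc2 : ‖Matrix.toEuclideanCLM (𝕜 := ℂ) (Φ T 0) u₀‖
        ≤ Real.exp (-η * (T - 0)) * ‖Matrix.toEuclideanCLM (𝕜 := ℂ) (Φ 0 0) u₀‖ := hc
    rw [hΦid 0, _root_.map_one] at hc2
    simpa using hc2
  -- pointwise bound on the integrand
  have hΦbd : ∀ t ∈ Set.Icc (0:ℝ) T,
      ‖Matrix.toEuclideanCLM (𝕜 := ℂ) (Φ T t) (b t)‖ ≤ Real.exp (-η * (T - t)) * ‖b t‖ := by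
    intro t htI
    have hc := TSA.contraction hη A hA (d := fun s => Matrix.toEuclideanCLM (𝕜 := ℂ) (Φ s t) (b t))
      (s₁ := t) (s₂ := T) htI.1 htI.2 (le_refl T)
      (fun s hs => (hΦ t htI (b t) s (Set.Icc_subset_Icc htI.1 (le_refl T) hs)).continuousAt.continuousWithinAt)
      (fun s hs => hΦ t htI (b t) s ⟨le_trans htI.1 (le_of_lt hs.1), le_of_lt hs.2⟩)
    have hc2 : ‖Matrix.toEuclideanCLM (𝕜 := ℂ) (Φ T t) (b t)‖
        ≤ Real.exp (-η * (T - t)) * ‖Matrix.toEuclideanCLM (𝕜 := ℂ) (Φ t t) (b t)‖ := hc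
    rw [hΦid t, _root_.map_one] at hc2
    simpa using hc2
  have hBnn : 0 ≤ B := le_trans (norm_nonneg _) (hB 0 h0I)
  -- integral bound
  have hbd2 : ‖P T (∫ τ in (0:ℝ)..a, r τ)‖ ≤ B / η * (Real.exp (-η * T₀) - Real.exp (-η * T)) := by
    rw [← ContinuousLinearMap.intervalIntegral_comp_comm (P T) (hrint 0 a h0I haI),
      ← intervalIntegral.integral_congr (fun t htu => hcongr t (hsub0 htu))]
    have hF : ∀ t ∈ Set.uIcc (0:ℝ) a, HasDerivAt (fun t => B / η * Real.exp (-η * (T - t)))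
        (B * Real.exp (-η * (T - t))) t := by
      intro t _
      have h1 : HasDerivAt (fun t : ℝ => -η * (T - t)) η t := by
        have := ((hasDerivAt_id t).const_sub T).const_mul (-η)
        simpa using this
      have h2 := ((Real.hasDerivAt_exp (-η * (T - t))).comp t h1).const_mul (B / η)
      simp only [Function.comp] at h2
      refine h2.congr_deriv ?_
      rw [mul_comm (Real.exp _) η, ← mul_assoc, div_mul_cancel₀ B hη.ne']
    have hgc : Continuous fun t : ℝ => B * Real.exp (-η * (T - t)) := by fun_prop
    have hFi : (∫ t in (0:ℝ)..a, B * Real.exp (-η * (T - t)))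
        = B / η * Real.exp (-η * (T - a)) - B / η * Real.exp (-η * (T - 0)) :=
      intervalIntegral.integral_eq_sub_of_hasDerivAt hF (hgc.intervalIntegrable _ _)
    have hnorm := intervalIntegral.norm_integral_le_abs_of_norm_le
      (f := fun t => Matrix.toEuclideanCLM (𝕜 := ℂ) (Φ T t) (b t))
      (g := fun t => B * Real.exp (-η * (T - t))) (a := (0:ℝ)) (b := a)
      (μ := MeasureTheory.volume) ?_ (hgc.intervalIntegrable _ _)
    · refine le_trans hnorm ?_
      have hTa : T - a = T₀ := by rw [ha]; ring
      have hT00 : T - 0 = T := by ring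
      rw [hFi, hTa, hT00]
      have hmono : Real.exp (-η * T) ≤ Real.exp (-η * T₀) := by
        apply Real.exp_le_exp.2
        nlinarith
      have hbη : (0:ℝ) ≤ B / η := by positivity
      have hnn : (0:ℝ) ≤ B / η * Real.exp (-η * T₀) - B / η * Real.exp (-η * T) := by
        nlinarith
      rw [abs_of_nonneg hnn, mul_sub]
    · have hmeas : MeasurableSet (Set.uIoc (0:ℝ) a) := measurableSet_uIoc
      refine (MeasureTheory.ae_restrict_mem hmeas).mono (fun t ht => ?_)
      rw [Set.uIoc_of_le ha0] at ht
      have htI : t ∈ Set.Icc (0:ℝ) T := ⟨le_of_lt ht.1, le_trans ht.2 haT⟩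
      show ‖Matrix.toEuclideanCLM (𝕜 := ℂ) (Φ T t) (b t)‖ ≤ B * Real.exp (-η * (T - t))
      calc ‖Matrix.toEuclideanCLM (𝕜 := ℂ) (Φ T t) (b t)‖
          ≤ Real.exp (-η * (T - t)) * ‖b t‖ := hΦbd t htI
        _ ≤ Real.exp (-η * (T - t)) * B :=
            mul_le_mul_of_nonneg_left (hB t htI) (le_of_lt (Real.exp_pos _))
        _ = B * Real.exp (-η * (T - t)) := mul_comm _ _
  have huTpos : (0:ℝ) < ‖u T‖ := norm_pos_iff.2 huT
  -- exponential смallness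
  have e1 : Real.exp (-η * T) * ‖u₀‖ ≤ ε * ‖u T‖ / 4 := by
    rcases eq_or_lt_of_le (norm_nonneg u₀) with h0 | h0
    · rw [← h0, mul_zero]; positivity
    · have hargpos : 0 < 4 * ‖u₀‖ / (ε * ‖u T‖) := by positivity
      have hlog : Real.log (4 * ‖u₀‖ / (ε * ‖u T‖)) ≤ η * T := by
        rw [div_mul_eq_mul_div, div_le_iff₀ hη] at hTlarge
        linarith [hTlarge]
      have harg : 4 * ‖u₀‖ / (ε * ‖u T‖) ≤ Real.exp (η * T) :=
        (Real.log_le_iff_le_exp hargpos).1 hlog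
      have hexp : Real.exp (-η * T) ≤ (4 * ‖u₀‖ / (ε * ‖u T‖))⁻¹ := by
        rw [show -η * T = -(η * T) by ring, Real.exp_neg]
        exact inv_anti₀ hargpos harg
      calc Real.exp (-η * T) * ‖u₀‖ ≤ (4 * ‖u₀‖ / (ε * ‖u T‖))⁻¹ * ‖u₀‖ :=
            mul_le_mul_of_nonneg_right hexp (le_of_lt h0)
        _ = ε * ‖u T‖ / 4 := by field_simp
  have e2 : B / η * Real.exp (-η * T₀) ≤ ε * ‖u T‖ / 4 := by
    rcases eq_or_lt_of_le hBnn with h0 | h0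
    · rw [← h0]; simp; positivity
    · have hargpos : 0 < 4 * B / (η * ε * ‖u T‖) := by positivity
      have hlog : Real.log (4 * B / (η * ε * ‖u T‖)) ≤ η * T₀ := by
        rw [div_mul_eq_mul_div, div_le_iff₀ hη] at hT₀large
        linarith [hT₀large]
      have harg : 4 * B / (η * ε * ‖u T‖) ≤ Real.exp (η * T₀) :=
        (Real.log_le_iff_le_exp hargpos).1 hlog
      have hexp : Real.exp (-η * T₀) ≤ (4 * B / (η * ε * ‖u T‖))⁻¹ := by
        rw [show -η * T₀ = -(η * T₀) by ring, Real.exp_neg]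
        exact inv_anti₀ hargpos harg
      calc B / η * Real.exp (-η * T₀) ≤ B / η * (4 * B / (η * ε * ‖u T‖))⁻¹ :=
            mul_le_mul_of_nonneg_left hexp (by positivity)
        _ = ε * ‖u T‖ / 4 := by field_simp
  have hdiff : ‖u T - w‖ ≤ ε * ‖u T‖ / 2 := by
    rw [huTw]
    refine le_trans (norm_add_le _ _) ?_
    have hexpT : (0:ℝ) ≤ B / η * Real.exp (-η * T) := by positivity
    calc ‖P T u₀‖ + ‖P T (∫ τ in (0:ℝ)..a, r τ)‖
        ≤ Real.exp (-η * T) * ‖u₀‖ + B / η * (Real.exp (-η * T₀) - Real.exp (-η * T)) := by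
          exact add_le_add hbd1 hbd2
      _ ≤ ε * ‖u T‖ / 4 + ε * ‖u T‖ / 4 := by
          apply add_le_add e1
          refine le_trans ?_ e2
          rw [mul_sub]
          linarith [hexpT]
      _ = ε * ‖u T‖ / 2 := by ring
  have hfin := TSA.normalize_sub_le (u T) w huT hwne
  refine le_trans hfin ?_
  rw [div_le_iff₀ huTpos]
  calc 2 * ‖u T - w‖ ≤ 2 * (ε * ‖u T‖ / 2) := by linarith [hdiff]
    _ = ε * ‖u T‖ := by ring
end

section
/- Let A(t)+A(t)† ≤ −2ηI with η>0, ‖b(t)‖ ≤ B, and let u solve u' = A u + b with u(0)=u₀. Fix h>0 and an integer r ≥ 0, and define the truncated solution ũ(jh) = 1_{jh < rh}·Φ(jh,0)u₀ + ∫_{max(0,(j−r)h)}^{jh} Φ(jh,t) b(t) dt. Then for every j > r, ‖u(jh) − ũ(jh)‖ ≤ e^{−ηrh}(‖u₀‖ + B/η). -/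
open scoped ComplexInnerProductSpace
open Matrix

variable {N : ℕ}

lemma dissip {η : ℝ} {A : ℝ → Matrix (Fin N) (Fin N) ℂ}
    (hdiss : ∀ (t : ℝ) (v : EuclideanSpace ℂ (Fin N)),
      (⟪v, Matrix.toEuclideanLin (A t + (A t)ᴴ) v⟫).re ≤ -2 * η * ‖v‖ ^ 2)
    (t : ℝ) (v : EuclideanSpace ℂ (Fin N)) :
    (⟪v, Matrix.toEuclideanCLM (𝕜 := ℂ) (A t) v⟫).re ≤ -η * ‖v‖ ^ 2 := by
  have h := hdiss t v
  rw [map_add] at h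
  have hadj : Matrix.toEuclideanLin (A t)ᴴ = LinearMap.adjoint (Matrix.toEuclideanLin (A t)) :=
    Matrix.toEuclideanLin_conjTranspose_eq_adjoint (A t)
  have h2 : (⟪v, Matrix.toEuclideanLin ((A t)ᴴ) v⟫).re
      = (⟪v, Matrix.toEuclideanLin (A t) v⟫).re := by
    rw [hadj, LinearMap.adjoint_inner_right, ← inner_conj_symm]
    exact Complex.conj_re _
  have h3 : Matrix.toEuclideanCLM (𝕜 := ℂ) (A t) v = Matrix.toEuclideanLin (A t) v := rfl
  rw [LinearMap.add_apply, inner_add_right] at h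
  rw [h3]
  have := Complex.add_re (⟪v, Matrix.toEuclideanLin (A t) v⟫)
    (⟪v, Matrix.toEuclideanLin ((A t)ᴴ) v⟫)
  rw [this, h2] at h
  nlinarith [h]

lemma decay {η : ℝ} {A : ℝ → Matrix (Fin N) (Fin N) ℂ}
    (hdiss : ∀ (t : ℝ) (v : EuclideanSpace ℂ (Fin N)),
      (⟪v, Matrix.toEuclideanCLM (𝕜 := ℂ) (A t) v⟫).re ≤ -η * ‖v‖ ^ 2)
    (f : ℝ → EuclideanSpace ℂ (Fin N)) {t₀ t₁ : ℝ} (h01 : t₀ ≤ t₁)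
    (hf : ∀ s ∈ Set.Icc t₀ t₁,
      HasDerivAt f (Matrix.toEuclideanCLM (𝕜 := ℂ) (A s) (f s)) s) :
    ‖f t₁‖ ≤ Real.exp (-η * (t₁ - t₀)) * ‖f t₀‖ := by
  set g : ℝ → ℝ := fun s => ‖f s‖ ^ 2 * Real.exp (2 * η * s) with hg
  have hgd : ∀ s ∈ Set.Icc t₀ t₁, HasDerivAt g
      ((2 * (⟪f s, Matrix.toEuclideanCLM (𝕜 := ℂ) (A s) (f s)⟫).re) * Real.exp (2 * η * s)
        + ‖f s‖ ^ 2 * (Real.exp (2 * η * s) * (2 * η))) s := by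
    intro s hs
    have h1 : HasDerivAt (fun t => (⟪f t, f t⟫ : ℂ))
        (⟪f s, Matrix.toEuclideanCLM (𝕜 := ℂ) (A s) (f s)⟫
          + ⟪Matrix.toEuclideanCLM (𝕜 := ℂ) (A s) (f s), f s⟫) s :=
      HasDerivAt.inner ℂ (hf s hs) (hf s hs)
    have h2 : HasDerivAt (fun t => (⟪f t, f t⟫ : ℂ).re)
        ((⟪f s, Matrix.toEuclideanCLM (𝕜 := ℂ) (A s) (f s)⟫
          + ⟪Matrix.toEuclideanCLM (𝕜 := ℂ) (A s) (f s), f s⟫).re) s :=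
      (Complex.reCLM.hasFDerivAt.comp_hasDerivAt s h1)
    have h2' : HasDerivAt (fun t => ‖f t‖ ^ 2)
        (2 * (⟪f s, Matrix.toEuclideanCLM (𝕜 := ℂ) (A s) (f s)⟫).re) s := by
      have hre : ∀ t, (⟪f t, f t⟫ : ℂ).re = ‖f t‖ ^ 2 := fun t => by
        have := inner_self_eq_norm_sq (𝕜 := ℂ) (f t)
        simpa using this
      have : (⟪f s, Matrix.toEuclideanCLM (𝕜 := ℂ) (A s) (f s)⟫
          + ⟪Matrix.toEuclideanCLM (𝕜 := ℂ) (A s) (f s), f s⟫).re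
          = 2 * (⟪f s, Matrix.toEuclideanCLM (𝕜 := ℂ) (A s) (f s)⟫).re := by
        rw [Complex.add_re, ← inner_conj_symm (f s), Complex.conj_re]; ring
      rw [← this]
      exact (funext hre) ▸ h2
    have h3 : HasDerivAt (fun t => Real.exp (2 * η * t))
        (Real.exp (2 * η * s) * (2 * η)) s := by
      simpa using ((hasDerivAt_id s).const_mul (2 * η)).exp
    exact h2'.mul h3
  have hanti : AntitoneOn g (Set.Icc t₀ t₁) := by
    apply antitoneOn_of_deriv_nonpos (convex_Icc t₀ t₁)
    · exact fun s hs => (hgd s hs).continuousAt.continuousWithinAt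
    · intro s hs
      rw [interior_Icc] at hs
      exact ((hgd s (Set.mem_Icc_of_Ioo hs)).differentiableAt).differentiableWithinAt
    · intro s hs
      rw [interior_Icc] at hs
      rw [(hgd s (Set.mem_Icc_of_Ioo hs)).deriv]
      have hd := hdiss s (f s)
      have he : (0:ℝ) < Real.exp (2 * η * s) := Real.exp_pos _
      nlinarith [hd, he]
  have hle : g t₁ ≤ g t₀ :=
    hanti (Set.left_mem_Icc.2 h01) (Set.right_mem_Icc.2 h01) h01
  have key : ‖f t₁‖ ^ 2 ≤ (Real.exp (-η * (t₁ - t₀)) * ‖f t₀‖) ^ 2 := by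
    have e1 : (0:ℝ) < Real.exp (2 * η * t₁) := Real.exp_pos _
    have hid : (Real.exp (-η * (t₁ - t₀))) ^ 2 * Real.exp (2 * η * t₁)
        = Real.exp (2 * η * t₀) := by
      rw [sq, ← Real.exp_add, ← Real.exp_add]
      congr 1
      ring
    have hle' : ‖f t₁‖ ^ 2 * Real.exp (2 * η * t₁)
        ≤ (‖f t₀‖ ^ 2 * (Real.exp (-η * (t₁ - t₀))) ^ 2) * Real.exp (2 * η * t₁) := by
      have : (‖f t₀‖ ^ 2 * (Real.exp (-η * (t₁ - t₀))) ^ 2) * Real.exp (2 * η * t₁)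
          = ‖f t₀‖ ^ 2 * Real.exp (2 * η * t₀) := by
        rw [mul_assoc, hid]
      rw [this]
      exact hle
    have h4 := le_of_mul_le_mul_right hle' e1
    rw [mul_pow]
    linarith
  exact le_of_pow_le_pow_left₀ two_ne_zero (by positivity) key

lemma uniq {η : ℝ} (hη : 0 < η) {A : ℝ → Matrix (Fin N) (Fin N) ℂ}
    (hdiss : ∀ (t : ℝ) (v : EuclideanSpace ℂ (Fin N)),
      (⟪v, Matrix.toEuclideanCLM (𝕜 := ℂ) (A t) v⟫).re ≤ -η * ‖v‖ ^ 2)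
    (z : ℝ → EuclideanSpace ℂ (Fin N))
    (f g : ℝ → EuclideanSpace ℂ (Fin N)) {t₀ t₁ : ℝ} (h01 : t₀ ≤ t₁)
    (hf : ∀ s ∈ Set.Icc t₀ t₁,
      HasDerivAt f (Matrix.toEuclideanCLM (𝕜 := ℂ) (A s) (f s) + z s) s)
    (hg : ∀ s ∈ Set.Icc t₀ t₁,
      HasDerivAt g (Matrix.toEuclideanCLM (𝕜 := ℂ) (A s) (g s) + z s) s)
    (h0 : f t₀ = g t₀) : f t₁ = g t₁ := by
  have hd : ∀ s ∈ Set.Icc t₀ t₁, HasDerivAt (fun t => f t - g t)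
      (Matrix.toEuclideanCLM (𝕜 := ℂ) (A s) (f s - g s)) s := by
    intro s hs
    have := (hf s hs).sub (hg s hs)
    rw [map_sub]; rw [add_sub_add_right_eq_sub] at this; exact this
  have := decay hdiss (fun t => f t - g t) h01 hd
  simp only [h0, sub_self, norm_zero, mul_zero] at this
  have h2 : f t₁ - g t₁ = 0 := by
    have := norm_le_zero_iff.mp this
    exact this
  exact sub_eq_zero.mp h2

lemma cocycle {η : ℝ} (hη : 0 < η) {A : ℝ → Matrix (Fin N) (Fin N) ℂ}
    (hdiss : ∀ (t : ℝ) (v : EuclideanSpace ℂ (Fin N)),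
      (⟪v, Matrix.toEuclideanCLM (𝕜 := ℂ) (A t) v⟫).re ≤ -η * ‖v‖ ^ 2)
    {Φ : ℝ → ℝ → Matrix (Fin N) (Fin N) ℂ}
    (hΦid : ∀ t, Φ t t = 1)
    (hΦ : ∀ (t : ℝ) (v : EuclideanSpace ℂ (Fin N)) (s : ℝ),
      HasDerivAt (fun s' => Matrix.toEuclideanCLM (𝕜 := ℂ) (Φ s' t) v)
        (Matrix.toEuclideanCLM (𝕜 := ℂ) (A s)
          (Matrix.toEuclideanCLM (𝕜 := ℂ) (Φ s t) v)) s)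
    (t p s : ℝ) (hps : p ≤ s) : Φ s t = Φ s p * Φ p t := by
  have key : ∀ v : EuclideanSpace ℂ (Fin N),
      Matrix.toEuclideanCLM (𝕜 := ℂ) (Φ s t) v
        = Matrix.toEuclideanCLM (𝕜 := ℂ) (Φ s p)
            (Matrix.toEuclideanCLM (𝕜 := ℂ) (Φ p t) v) := by
    intro v
    have hfun := uniq hη hdiss (fun _ => (0 : EuclideanSpace ℂ (Fin N)))
      (fun s' => Matrix.toEuclideanCLM (𝕜 := ℂ) (Φ s' t) v)
      (fun s' => Matrix.toEuclideanCLM (𝕜 := ℂ) (Φ s' p)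
        (Matrix.toEuclideanCLM (𝕜 := ℂ) (Φ p t) v))
      hps
      (fun s' _ => by simpa using hΦ t v s')
      (fun s' _ => by simpa using hΦ p (Matrix.toEuclideanCLM (𝕜 := ℂ) (Φ p t) v) s')
      (by simp [hΦid p])
    exact hfun
  have : Matrix.toEuclideanCLM (𝕜 := ℂ) (Φ s t)
      = Matrix.toEuclideanCLM (𝕜 := ℂ) (Φ s p * Φ p t) := by
    ext1 v
    rw [_root_.map_mul]
    exact key v
  exact (Matrix.toEuclideanCLM (𝕜 := ℂ) (n := Fin N)).injective this

lemma flowInv {η : ℝ} (hη : 0 < η) {A : ℝ → Matrix (Fin N) (Fin N) ℂ}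
    (hdiss : ∀ (t : ℝ) (v : EuclideanSpace ℂ (Fin N)),
      (⟪v, Matrix.toEuclideanCLM (𝕜 := ℂ) (A t) v⟫).re ≤ -η * ‖v‖ ^ 2)
    {Φ : ℝ → ℝ → Matrix (Fin N) (Fin N) ℂ}
    (hΦid : ∀ t, Φ t t = 1)
    (hΦ : ∀ (t : ℝ) (v : EuclideanSpace ℂ (Fin N)) (s : ℝ),
      HasDerivAt (fun s' => Matrix.toEuclideanCLM (𝕜 := ℂ) (Φ s' t) v)
        (Matrix.toEuclideanCLM (𝕜 := ℂ) (A s)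
          (Matrix.toEuclideanCLM (𝕜 := ℂ) (Φ s t) v)) s)
    (s p : ℝ) : Φ s p * Φ p s = 1 := by
  rcases le_total p s with hps | hsp
  · have := cocycle hη hdiss hΦid hΦ s p s hps
    rw [hΦid s] at this
    exact this.symm
  · have := cocycle hη hdiss hΦid hΦ p s p hsp
    rw [hΦid p] at this
    exact mul_eq_one_comm.mp this.symm

lemma flowLeft {η : ℝ} (hη : 0 < η) {A : ℝ → Matrix (Fin N) (Fin N) ℂ}
    (hdiss : ∀ (t : ℝ) (v : EuclideanSpace ℂ (Fin N)),
      (⟪v, Matrix.toEuclideanCLM (𝕜 := ℂ) (A t) v⟫).re ≤ -η * ‖v‖ ^ 2)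
    {Φ : ℝ → ℝ → Matrix (Fin N) (Fin N) ℂ}
    (hΦid : ∀ t, Φ t t = 1)
    (hΦ : ∀ (t : ℝ) (v : EuclideanSpace ℂ (Fin N)) (s : ℝ),
      HasDerivAt (fun s' => Matrix.toEuclideanCLM (𝕜 := ℂ) (Φ s' t) v)
        (Matrix.toEuclideanCLM (𝕜 := ℂ) (A s)
          (Matrix.toEuclideanCLM (𝕜 := ℂ) (Φ s t) v)) s)
    (p t : ℝ) : Φ p t = (Φ t p)⁻¹ :=
  (Matrix.inv_eq_left_inv (flowInv hη hdiss hΦid hΦ p t)).symm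

lemma contFlow {A : ℝ → Matrix (Fin N) (Fin N) ℂ}
    {Φ : ℝ → ℝ → Matrix (Fin N) (Fin N) ℂ}
    (hΦ : ∀ (t : ℝ) (v : EuclideanSpace ℂ (Fin N)) (s : ℝ),
      HasDerivAt (fun s' => Matrix.toEuclideanCLM (𝕜 := ℂ) (Φ s' t) v)
        (Matrix.toEuclideanCLM (𝕜 := ℂ) (A s)
          (Matrix.toEuclideanCLM (𝕜 := ℂ) (Φ s t) v)) s)
    (t₀ : ℝ) : Continuous (fun s => Φ s t₀) := by
  apply continuous_matrix
  intro i k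
  have hv : Continuous (fun s => Matrix.toEuclideanCLM (𝕜 := ℂ) (Φ s t₀)
      ((WithLp.equiv 2 (Fin N → ℂ)).symm (Pi.single k 1))) := by
    apply continuous_iff_continuousAt.mpr
    intro s
    exact (hΦ t₀ ((WithLp.equiv 2 (Fin N → ℂ)).symm (Pi.single k 1)) s).continuousAt
  have heq : (fun s => Φ s t₀ i k)
      = fun s => (WithLp.equiv 2 (Fin N → ℂ))
          (Matrix.toEuclideanCLM (𝕜 := ℂ) (Φ s t₀)
            ((WithLp.equiv 2 (Fin N → ℂ)).symm (Pi.single k 1))) i := by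
    funext s
    change Φ s t₀ i k = (Φ s t₀ *ᵥ Pi.single k 1) i
    simp [Matrix.toLin'_apply, Matrix.mulVec_single]
  rw [heq]
  exact (continuous_apply i).comp ((PiLp.continuous_ofLp 2 (fun _ : Fin N => ℂ)).comp hv)

lemma contFlowRev {η : ℝ} (hη : 0 < η) {A : ℝ → Matrix (Fin N) (Fin N) ℂ}
    (hdiss : ∀ (t : ℝ) (v : EuclideanSpace ℂ (Fin N)),
      (⟪v, Matrix.toEuclideanCLM (𝕜 := ℂ) (A t) v⟫).re ≤ -η * ‖v‖ ^ 2)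
    {Φ : ℝ → ℝ → Matrix (Fin N) (Fin N) ℂ}
    (hΦid : ∀ t, Φ t t = 1)
    (hΦ : ∀ (t : ℝ) (v : EuclideanSpace ℂ (Fin N)) (s : ℝ),
      HasDerivAt (fun s' => Matrix.toEuclideanCLM (𝕜 := ℂ) (Φ s' t) v)
        (Matrix.toEuclideanCLM (𝕜 := ℂ) (A s)
          (Matrix.toEuclideanCLM (𝕜 := ℂ) (Φ s t) v)) s)
    (t₀ : ℝ) : Continuous (fun t => Φ t₀ t) := by
  have hrew : (fun t => Φ t₀ t) = fun t => (Φ t t₀)⁻¹ := by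
    funext t
    exact flowLeft hη hdiss hΦid hΦ t₀ t
  rw [hrew]
  have hC := contFlow hΦ t₀
  have hdet : ∀ t, (Φ t t₀).det ≠ 0 := by
    intro t
    have h1 : (Φ t t₀).det * (Φ t₀ t).det = 1 := by
      rw [← Matrix.det_mul, flowInv hη hdiss hΦid hΦ t t₀, Matrix.det_one]
    exact left_ne_zero_of_mul_eq_one h1
  have : (fun t => (Φ t t₀)⁻¹) = fun t => (Ring.inverse (Φ t t₀).det) • (Φ t t₀).adjugate := by
    funext t; exact Matrix.inv_def _
  rw [this]
  have hdetC : Continuous fun t => (Φ t t₀).det := hC.matrix_det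
  have hinvC : Continuous fun t => Ring.inverse (Φ t t₀).det := by
    simp only [Ring.inverse_eq_inv']
    exact hdetC.inv₀ hdet
  exact hinvC.smul hC.matrix_adjugate

lemma contCLMapp {M : ℝ → Matrix (Fin N) (Fin N) ℂ} {w : ℝ → EuclideanSpace ℂ (Fin N)}
    (hM : Continuous M) (hw : Continuous w) :
    Continuous (fun t => Matrix.toEuclideanCLM (𝕜 := ℂ) (M t) (w t)) := by
  have heq : (fun t => Matrix.toEuclideanCLM (𝕜 := ℂ) (M t) (w t))
      = fun t => (WithLp.equiv 2 (Fin N → ℂ)).symm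
          ((M t).mulVec ((WithLp.equiv 2 (Fin N → ℂ)) (w t))) := by
    funext t
    rfl
  rw [heq]
  exact (PiLp.continuous_toLp 2 (fun _ : Fin N => ℂ)).comp
    (hM.matrix_mulVec ((PiLp.continuous_ofLp 2 (fun _ : Fin N => ℂ)).comp hw))

noncomputable def recL (N : ℕ) :
    (Fin N → EuclideanSpace ℂ (Fin N))
      →L[ℂ] (EuclideanSpace ℂ (Fin N) →L[ℂ] EuclideanSpace ℂ (Fin N)) :=
  LinearMap.toContinuousLinearMap
    { toFun := fun f => ∑ k, (EuclideanSpace.proj k).smulRight (f k)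
      map_add' := fun f g => by
        ext1 v
        simp [ContinuousLinearMap.smulRight_apply, smul_add, Finset.sum_add_distrib]
      map_smul' := fun c f => by
        ext1 v
        simp [ContinuousLinearMap.smulRight_apply, Finset.smul_sum, smul_comm c] }

lemma recL_spec (T : EuclideanSpace ℂ (Fin N) →L[ℂ] EuclideanSpace ℂ (Fin N)) :
    recL N (fun k => T (EuclideanSpace.single k 1)) = T := by
  ext1 v
  have hv : ∑ k, v k • EuclideanSpace.single k (1:ℂ) = v := by
    have := (EuclideanSpace.basisFun (Fin N) ℂ).sum_repr v
    simpa [EuclideanSpace.basisFun_apply, EuclideanSpace.basisFun_repr] using this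
  calc recL N (fun k => T (EuclideanSpace.single k 1)) v
      = ∑ k, v k • T (EuclideanSpace.single k 1) := by
        simp [recL, LinearMap.coe_toContinuousLinearMap',
          ContinuousLinearMap.smulRight_apply]
    _ = T (∑ k, v k • EuclideanSpace.single k (1:ℂ)) := by
        rw [map_sum]
        congr 1
        funext k
        rw [_root_.map_smul]
    _ = T v := by rw [hv]

lemma hasDerivAt_toCLM {F : ℝ → Matrix (Fin N) (Fin N) ℂ} {D : Matrix (Fin N) (Fin N) ℂ}
    {s : ℝ}
    (h : ∀ v, HasDerivAt (fun s' => Matrix.toEuclideanCLM (𝕜 := ℂ) (F s') v)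
      (Matrix.toEuclideanCLM (𝕜 := ℂ) D v) s) :
    HasDerivAt (fun s' => (Matrix.toEuclideanCLM (𝕜 := ℂ) (F s')
        : EuclideanSpace ℂ (Fin N) →L[ℂ] EuclideanSpace ℂ (Fin N)))
      (Matrix.toEuclideanCLM (𝕜 := ℂ) D) s := by
  have hG : HasDerivAt
      (fun s' => (fun k => Matrix.toEuclideanCLM (𝕜 := ℂ) (F s') (EuclideanSpace.single k 1)))
      (fun k => Matrix.toEuclideanCLM (𝕜 := ℂ) D (EuclideanSpace.single k 1)) s := by
    exact hasDerivAt_pi (𝕜 := ℝ) (E' := fun _ : Fin N => EuclideanSpace ℂ (Fin N))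
      |>.2 (fun k => h (EuclideanSpace.single k 1))
  have hcomp := (((recL N).restrictScalars ℝ).hasFDerivAt.comp_hasDerivAt s hG)
  have heq : ((recL N) ∘ fun s' =>
      (fun k => Matrix.toEuclideanCLM (𝕜 := ℂ) (F s') (EuclideanSpace.single k 1)))
      = fun s' => (Matrix.toEuclideanCLM (𝕜 := ℂ) (F s')
        : EuclideanSpace ℂ (Fin N) →L[ℂ] EuclideanSpace ℂ (Fin N)) := by
    funext s'
    exact recL_spec _
  rw [show (⇑(ContinuousLinearMap.restrictScalars ℝ (recL N)) : _ → _) = ⇑(recL N) from rfl,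
    heq] at hcomp
  rw [recL_spec] at hcomp
  exact hcomp

lemma duhamel {η : ℝ} (hη : 0 < η) {A : ℝ → Matrix (Fin N) (Fin N) ℂ}
    (hdiss : ∀ (t : ℝ) (v : EuclideanSpace ℂ (Fin N)),
      (⟪v, Matrix.toEuclideanCLM (𝕜 := ℂ) (A t) v⟫).re ≤ -η * ‖v‖ ^ 2)
    {b : ℝ → EuclideanSpace ℂ (Fin N)} (hb : Continuous b)
    {u : ℝ → EuclideanSpace ℂ (Fin N)}
    (hu : ∀ t, HasDerivAt u (Matrix.toEuclideanCLM (𝕜 := ℂ) (A t) (u t) + b t) t)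
    {Φ : ℝ → ℝ → Matrix (Fin N) (Fin N) ℂ}
    (hΦid : ∀ t, Φ t t = 1)
    (hΦ : ∀ (t : ℝ) (v : EuclideanSpace ℂ (Fin N)) (s : ℝ),
      HasDerivAt (fun s' => Matrix.toEuclideanCLM (𝕜 := ℂ) (Φ s' t) v)
        (Matrix.toEuclideanCLM (𝕜 := ℂ) (A s)
          (Matrix.toEuclideanCLM (𝕜 := ℂ) (Φ s t) v)) s)
    {t₀ T : ℝ} (hT : t₀ ≤ T) :
    u T = Matrix.toEuclideanCLM (𝕜 := ℂ) (Φ T t₀) (u t₀)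
      + ∫ t in t₀..T, Matrix.toEuclideanCLM (𝕜 := ℂ) (Φ T t) (b t) := by
  have hcont : Continuous fun t => Matrix.toEuclideanCLM (𝕜 := ℂ) (Φ t₀ t) (b t) :=
    contCLMapp (contFlowRev hη hdiss hΦid hΦ t₀) hb
  set c : ℝ → EuclideanSpace ℂ (Fin N) :=
    fun s => ∫ t in t₀..s, Matrix.toEuclideanCLM (𝕜 := ℂ) (Φ t₀ t) (b t) with hcdef
  have hc : ∀ s, HasDerivAt c (Matrix.toEuclideanCLM (𝕜 := ℂ) (Φ t₀ s) (b s)) s :=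
    fun s => (hcont.integral_hasStrictDerivAt t₀ s).hasDerivAt
  have hMc : ∀ s, HasDerivAt
      (fun s' => (Matrix.toEuclideanCLM (𝕜 := ℂ) (Φ s' t₀)
        : EuclideanSpace ℂ (Fin N) →L[ℂ] EuclideanSpace ℂ (Fin N)))
      (Matrix.toEuclideanCLM (𝕜 := ℂ) (A s * Φ s t₀)) s := by
    intro s
    apply hasDerivAt_toCLM
    intro v
    have heq : Matrix.toEuclideanCLM (𝕜 := ℂ) (A s * Φ s t₀) v
        = Matrix.toEuclideanCLM (𝕜 := ℂ) (A s)
            (Matrix.toEuclideanCLM (𝕜 := ℂ) (Φ s t₀) v) := by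
      rw [_root_.map_mul]; rfl
    rw [heq]
    exact hΦ t₀ v s
  set v : ℝ → EuclideanSpace ℂ (Fin N) :=
    fun s => Matrix.toEuclideanCLM (𝕜 := ℂ) (Φ s t₀) (u t₀ + c s) with hvdef
  have hv : ∀ s, HasDerivAt v
      (Matrix.toEuclideanCLM (𝕜 := ℂ) (A s) (v s) + b s) s := by
    intro s
    have hMr := ((ContinuousLinearMap.restrictScalarsL ℂ (EuclideanSpace ℂ (Fin N))
        (EuclideanSpace ℂ (Fin N)) ℝ ℝ).hasFDerivAt.comp_hasDerivAt s (hMc s))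
    have h0 := hMr.clm_apply (HasDerivAt.const_add (u t₀) (hc s))
    have h1 : HasDerivAt v
        (Matrix.toEuclideanCLM (𝕜 := ℂ) (A s * Φ s t₀) (u t₀ + c s)
          + Matrix.toEuclideanCLM (𝕜 := ℂ) (Φ s t₀)
              (Matrix.toEuclideanCLM (𝕜 := ℂ) (Φ t₀ s) (b s))) s := h0
    have h2 : Matrix.toEuclideanCLM (𝕜 := ℂ) (Φ s t₀)
        (Matrix.toEuclideanCLM (𝕜 := ℂ) (Φ t₀ s) (b s)) = b s := by
      have hmul : Matrix.toEuclideanCLM (𝕜 := ℂ) (Φ s t₀)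
          (Matrix.toEuclideanCLM (𝕜 := ℂ) (Φ t₀ s) (b s))
          = Matrix.toEuclideanCLM (𝕜 := ℂ) (Φ s t₀ * Φ t₀ s) (b s) := by
        rw [_root_.map_mul]; rfl
      rw [hmul, flowInv hη hdiss hΦid hΦ s t₀, _root_.map_one]
      rfl
    have h3 : Matrix.toEuclideanCLM (𝕜 := ℂ) (A s * Φ s t₀) (u t₀ + c s)
        = Matrix.toEuclideanCLM (𝕜 := ℂ) (A s) (v s) := by
      rw [_root_.map_mul]; rfl
    rw [h2, h3] at h1
    exact h1
  have hvT : u T = v T := by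
    apply uniq hη hdiss b u v hT (fun s _ => hu s) (fun s _ => hv s)
    have : c t₀ = 0 := intervalIntegral.integral_same
    simp [hvdef, this, hΦid t₀]
  have hsplit : v T = Matrix.toEuclideanCLM (𝕜 := ℂ) (Φ T t₀) (u t₀)
      + Matrix.toEuclideanCLM (𝕜 := ℂ) (Φ T t₀) (c T) := by
    simp [hvdef, map_add]
  have hlast : Matrix.toEuclideanCLM (𝕜 := ℂ) (Φ T t₀) (c T)
      = ∫ t in t₀..T, Matrix.toEuclideanCLM (𝕜 := ℂ) (Φ T t) (b t) := by
    rw [hcdef]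
    rw [← ContinuousLinearMap.intervalIntegral_comp_comm _ (hcont.intervalIntegrable t₀ T)]
    apply intervalIntegral.integral_congr
    intro t _
    show Matrix.toEuclideanCLM (𝕜 := ℂ) (Φ T t₀)
        (Matrix.toEuclideanCLM (𝕜 := ℂ) (Φ t₀ t) (b t))
      = Matrix.toEuclideanCLM (𝕜 := ℂ) (Φ T t) (b t)
    have hcc : Φ T t = Φ T t₀ * Φ t₀ t := cocycle hη hdiss hΦid hΦ t t₀ T hT
    rw [hcc, _root_.map_mul]
    rfl
  rw [hvT, hsplit, hlast]

set_option maxHeartbeats 1000000 in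
theorem inhomogeneous_truncation_bound {N : ℕ} (η B h : ℝ) (hη : 0 < η) (hh : 0 < h)
    (r : ℕ)
    (A : ℝ → Matrix (Fin N) (Fin N) ℂ)
    (hdiss : ∀ (t : ℝ) (v : EuclideanSpace ℂ (Fin N)),
      (⟪v, Matrix.toEuclideanLin (A t + (A t)ᴴ) v⟫).re ≤ -2 * η * ‖v‖ ^ 2)
    (b : ℝ → EuclideanSpace ℂ (Fin N)) (hb : Continuous b) (hB : ∀ t, ‖b t‖ ≤ B)
    (u₀ : EuclideanSpace ℂ (Fin N)) (u : ℝ → EuclideanSpace ℂ (Fin N)) (hu0 : u 0 = u₀)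
    (hu : ∀ t, HasDerivAt u (Matrix.toEuclideanCLM (𝕜 := ℂ) (A t) (u t) + b t) t)
    (Φ : ℝ → ℝ → Matrix (Fin N) (Fin N) ℂ)
    (hΦid : ∀ t, Φ t t = 1)
    (hΦ : ∀ (t : ℝ) (v : EuclideanSpace ℂ (Fin N)) (s : ℝ),
      HasDerivAt (fun s' => Matrix.toEuclideanCLM (𝕜 := ℂ) (Φ s' t) v)
        (Matrix.toEuclideanCLM (𝕜 := ℂ) (A s)
          (Matrix.toEuclideanCLM (𝕜 := ℂ) (Φ s t) v)) s)
    (j : ℕ) (hj : r < j) :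
    ‖u ((j : ℝ) * h) -
      ((if (j : ℝ) * h < (r : ℝ) * h then
          Matrix.toEuclideanCLM (𝕜 := ℂ) (Φ ((j : ℝ) * h) 0) u₀ else 0)
        + ∫ t in (max 0 (((j : ℝ) - (r : ℝ)) * h))..((j : ℝ) * h),
            Matrix.toEuclideanCLM (𝕜 := ℂ) (Φ ((j : ℝ) * h) t) (b t))‖
      ≤ Real.exp (-η * (r : ℝ) * h) * (‖u₀‖ + B / η) := by
  have hdiss' : ∀ (t : ℝ) (v : EuclideanSpace ℂ (Fin N)),
      (⟪v, Matrix.toEuclideanCLM (𝕜 := ℂ) (A t) v⟫).re ≤ -η * ‖v‖ ^ 2 := dissip hdiss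
  have hrj : (r : ℝ) + 1 ≤ (j : ℝ) := by exact_mod_cast hj
  have hr0 : (0:ℝ) ≤ (r : ℝ) := Nat.cast_nonneg r
  set T : ℝ := (j : ℝ) * h with hTdef
  set t0 : ℝ := ((j : ℝ) - (r : ℝ)) * h with ht0def
  have h0t0 : 0 ≤ t0 := mul_nonneg (by linarith) hh.le
  have ht0T : t0 ≤ T := by
    rw [hTdef, ht0def]
    nlinarith
  have hif : ¬((j : ℝ) * h < (r : ℝ) * h) := by
    push_neg
    nlinarith
  rw [if_neg hif, zero_add, max_eq_right h0t0]
  have hduh := duhamel hη hdiss' hb hu hΦid hΦ ht0T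
  have hkey : u T - (∫ t in t0..T, Matrix.toEuclideanCLM (𝕜 := ℂ) (Φ T t) (b t))
      = Matrix.toEuclideanCLM (𝕜 := ℂ) (Φ T t0) (u t0) := by
    rw [hduh]
    exact add_sub_cancel_right _ _
  rw [hkey]
  have hBnn : (0:ℝ) ≤ B := le_trans (norm_nonneg _) (hB 0)
  -- decay bound for the propagator term
  have hdec : ‖Matrix.toEuclideanCLM (𝕜 := ℂ) (Φ T t0) (u t0)‖
      ≤ Real.exp (-η * (T - t0)) * ‖u t0‖ := by
    have hf := decay hdiss' (fun s => Matrix.toEuclideanCLM (𝕜 := ℂ) (Φ s t0) (u t0)) ht0T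
      (fun s _ => hΦ t0 (u t0) s)
    have h00 : Matrix.toEuclideanCLM (𝕜 := ℂ) (Φ t0 t0) (u t0) = u t0 := by
      rw [hΦid t0, _root_.map_one]
      rfl
    simpa [h00] using hf
  -- bound on ‖u t0‖
  have hu0b : ‖u t0‖ ≤ ‖u₀‖ + B / η := by
    have hduh0 := duhamel hη hdiss' hb hu hΦid hΦ h0t0
    rw [hu0] at hduh0
    rw [hduh0]
    refine le_trans (norm_add_le _ _) (add_le_add ?_ ?_)
    · -- homogeneous part
      have hf := decay hdiss' (fun s => Matrix.toEuclideanCLM (𝕜 := ℂ) (Φ s 0) u₀) h0t0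
        (fun s _ => hΦ 0 u₀ s)
      have h00 : Matrix.toEuclideanCLM (𝕜 := ℂ) (Φ (0:ℝ) 0) u₀ = u₀ := by
        rw [hΦid 0, _root_.map_one]
        rfl
      simp only [h00] at hf
      refine le_trans hf ?_
      have : Real.exp (-η * (t0 - 0)) ≤ 1 := by
        rw [Real.exp_le_one_iff]
        nlinarith
      nlinarith [norm_nonneg u₀]
    · -- integral part
      have hbound : ∀ t ∈ Set.uIoc (0:ℝ) t0,
          ‖Matrix.toEuclideanCLM (𝕜 := ℂ) (Φ t0 t) (b t)‖
            ≤ B * Real.exp (-η * (t0 - t)) := by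
        intro t ht
        rw [Set.uIoc_of_le h0t0] at ht
        have htle : t ≤ t0 := ht.2
        have hf := decay hdiss' (fun s => Matrix.toEuclideanCLM (𝕜 := ℂ) (Φ s t) (b t)) htle
          (fun s _ => hΦ t (b t) s)
        have h00 : Matrix.toEuclideanCLM (𝕜 := ℂ) (Φ t t) (b t) = b t := by
          rw [hΦid t, _root_.map_one]
          rfl
        simp only [h00] at hf
        refine le_trans hf ?_
        have he : (0:ℝ) < Real.exp (-η * (t0 - t)) := Real.exp_pos _
        nlinarith [hB t]
      have hgint : IntervalIntegrable (fun t => B * Real.exp (-η * (t0 - t))) MeasureTheory.volume 0 t0 := by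
        exact (continuous_const.mul (Real.continuous_exp.comp
          (continuous_const.mul (continuous_const.sub continuous_id)))).intervalIntegrable 0 t0
      have hle1 := intervalIntegral.norm_integral_le_abs_of_norm_le
        ((MeasureTheory.ae_restrict_iff' measurableSet_uIoc).mpr
          (MeasureTheory.ae_of_all _ hbound)) hgint
      refine le_trans hle1 ?_
      -- compute the integral
      have hF : ∀ t : ℝ, HasDerivAt (fun t' => B / η * Real.exp (-η * (t0 - t')))
          (B * Real.exp (-η * (t0 - t))) t := by
        intro t
        have hin : HasDerivAt (fun t' : ℝ => -η * (t0 - t')) η t := by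
          simpa using (HasDerivAt.const_sub t0 (hasDerivAt_id t)).const_mul (-η)
        have := (hin.exp).const_mul (B / η)
        rw [show B * Real.exp (-η * (t0 - t)) = B / η * (Real.exp (-η * (t0 - t)) * η) by
          rw [mul_comm (Real.exp _) η, ← mul_assoc, div_mul_cancel₀ B hη.ne']]
        exact this
      have hcalc : ∫ t in (0:ℝ)..t0, B * Real.exp (-η * (t0 - t))
          = B / η * Real.exp (-η * (t0 - t0)) - B / η * Real.exp (-η * (t0 - 0)) := by
        exact intervalIntegral.integral_eq_sub_of_hasDerivAt (fun t _ => hF t) hgint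
      rw [hcalc]
      have he1 : Real.exp (-η * (t0 - t0)) = 1 := by simp
      have he2 : (0:ℝ) < Real.exp (-η * (t0 - 0)) := Real.exp_pos _
      rw [he1]
      have hBη : 0 ≤ B / η := div_nonneg hBnn hη.le
      have he3 : Real.exp (-η * (t0 - 0)) ≤ 1 := by
        rw [Real.exp_le_one_iff]
        nlinarith
      rw [abs_of_nonneg (by nlinarith)]
      nlinarith
  have hTt0 : T - t0 = (r : ℝ) * h := by
    rw [hTdef, ht0def]
    ring
  calc ‖Matrix.toEuclideanCLM (𝕜 := ℂ) (Φ T t0) (u t0)‖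
      ≤ Real.exp (-η * (T - t0)) * ‖u t0‖ := hdec
    _ ≤ Real.exp (-η * (T - t0)) * (‖u₀‖ + B / η) :=
        mul_le_mul_of_nonneg_left hu0b (Real.exp_pos _).le
    _ = Real.exp (-η * (r : ℝ) * h) * (‖u₀‖ + B / η) := by
        rw [hTt0, mul_assoc]
end

section
/- For any Hermitian matrices L ≤ 0 and H, and any real k, the unitary U_k(t) = e^{it(kL + H)} satisfies ‖U_k(t)‖ = 1, and the operator-valued integral representation holds at t = 0: ∫_ℝ f(k)/(1 − ik) dk = 1, where f(k) = 1/(2π e^{−2^β} e^{(1+ik)^β}) for β ∈ (0,1), i.e. the LCHS kernel integrates to the identity when the evolution time is zero. -/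
open Complex Real MeasureTheory Filter intervalIntegral Set Topology




variable {β : ℝ}

lemma c_pos (hβ0 : 0 < β) (hβ1 : β < 1) : 0 < Real.cos (β * (π / 2)) := by
  apply Real.cos_pos_of_mem_Ioo
  constructor
  · nlinarith [Real.pi_pos]
  · nlinarith [Real.pi_pos]

lemma re_cpow_ge (hβ0 : 0 < β) (hβ1 : β < 1) {z : ℂ} (hz : 0 < z.re) :
    Real.cos (β * (π / 2)) * ‖z‖ ^ β ≤ (z ^ (β : ℂ)).re := by
  have hz0 : z ≠ 0 := by
    intro h; rw [h] at hz; simp at hz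
  rw [Complex.cpow_def_of_ne_zero hz0, Complex.exp_re]
  have hre : (Complex.log z * (β : ℂ)).re = β * Real.log (‖z‖) := by
    simp [Complex.mul_re, Complex.log_re, mul_comm]
  have him : (Complex.log z * (β : ℂ)).im = β * z.arg := by
    simp [Complex.mul_im, Complex.log_im, mul_comm]
  rw [hre, him]
  have habs : Real.exp (β * Real.log (‖z‖)) = ‖z‖ ^ β := by
    rw [Real.rpow_def_of_pos (norm_pos_iff.mpr hz0), mul_comm]
  rw [habs, mul_comm (Real.cos (β * (π / 2)))]
  apply mul_le_mul_of_nonneg_left _ (Real.rpow_nonneg (norm_nonneg z) β)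
  have harg : |z.arg| < π / 2 := Complex.abs_arg_lt_pi_div_two_iff.mpr (Or.inl hz)
  calc Real.cos (β * (π / 2)) ≤ Real.cos |β * z.arg| := by
        apply Real.cos_le_cos_of_nonneg_of_le_pi (abs_nonneg _)
        · nlinarith [Real.pi_pos]
        · rw [abs_mul, abs_of_pos hβ0]
          exact mul_le_mul_of_nonneg_left harg.le hβ0.le
    _ = Real.cos (β * z.arg) := Real.cos_abs _

lemma abs_exp_neg_cpow (hβ0 : 0 < β) (hβ1 : β < 1) {z : ℂ} (hz : 0 < z.re) :
    ‖Complex.exp (-z ^ (β : ℂ))‖ ≤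
      Real.exp (-(Real.cos (β * (π / 2)) * ‖z‖ ^ β)) := by
  rw [Complex.norm_exp, Complex.neg_re]
  exact Real.exp_le_exp.2 (neg_le_neg (re_cpow_ge hβ0 hβ1 hz))

lemma abs_exp_neg_cpow_le_one (hβ0 : 0 < β) (hβ1 : β < 1) {z : ℂ} (hz : 0 < z.re) :
    ‖Complex.exp (-z ^ (β : ℂ))‖ ≤ 1 := by
  refine (abs_exp_neg_cpow hβ0 hβ1 hz).trans ?_
  rw [Real.exp_le_one_iff, neg_nonpos]
  exact mul_nonneg (c_pos hβ0 hβ1).le (Real.rpow_nonneg (norm_nonneg z) β)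

lemma abs_exp_neg_cpow_split (hβ0 : 0 < β) (hβ1 : β < 1) {z : ℂ} (hz : 0 < z.re) :
    ‖Complex.exp (-z ^ (β : ℂ))‖ ≤
      Real.exp (-(Real.cos (β * (π / 2)) / 2 * z.re ^ β)) *
      Real.exp (-(Real.cos (β * (π / 2)) / 2 * |z.im| ^ β)) := by
  set c := Real.cos (β * (π / 2)) with hc
  have hcpos : 0 < c := c_pos hβ0 hβ1
  refine (abs_exp_neg_cpow hβ0 hβ1 hz).trans ?_
  rw [← Real.exp_add, Real.exp_le_exp]
  have h1 : z.re ^ β ≤ ‖z‖ ^ β :=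
    Real.rpow_le_rpow hz.le (Complex.re_le_norm z) hβ0.le
  have h2 : |z.im| ^ β ≤ ‖z‖ ^ β :=
    Real.rpow_le_rpow (abs_nonneg _) (Complex.abs_im_le_norm z) hβ0.le
  nlinarith [Real.rpow_nonneg (norm_nonneg z) β]






lemma pow_le_factorial_mul_exp {u : ℝ} (hu : 0 ≤ u) (m : ℕ) :
    u ^ m ≤ (m.factorial : ℝ) * Real.exp u := by
  have h1 : u ^ m / (m.factorial : ℝ) ≤ ∑ i ∈ Finset.range (m + 1), u ^ i / (i.factorial : ℝ) := by
    refine Finset.single_le_sum (f := fun i => u ^ i / (i.factorial : ℝ))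
      (fun i _ => by positivity) (Finset.self_mem_range_succ m)
  have h3 : u ^ m / (m.factorial : ℝ) ≤ Real.exp u :=
    le_trans h1 (Real.sum_le_exp_of_nonneg hu (m + 1))
  have hf : (0 : ℝ) < (m.factorial : ℝ) := by positivity
  calc u ^ m = u ^ m / (m.factorial : ℝ) * (m.factorial : ℝ) := by field_simp
    _ ≤ Real.exp u * (m.factorial : ℝ) := mul_le_mul_of_nonneg_right h3 hf.le
    _ = (m.factorial : ℝ) * Real.exp u := by ring

lemma exp_neg_rpow_bound {β c : ℝ} (hβ0 : 0 < β) (hc : 0 < c) :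
    ∃ C : ℝ, 0 < C ∧ ∀ k : ℝ, Real.exp (-(c * |k| ^ β)) ≤ C * (1 + k ^ 2)⁻¹ := by
  set m : ℕ := ⌈2 / β⌉₊ with hm
  set B : ℝ := (m.factorial : ℝ) / c ^ m with hB
  have hcm : (0:ℝ) < c ^ m := by positivity
  have hBpos : 0 < B := by positivity
  refine ⟨2 + 2 * B, by positivity, fun k => ?_⟩
  have hk2 : (0:ℝ) < 1 + k ^ 2 := by positivity
  have hu : 0 ≤ c * |k| ^ β := by positivity
  have hexp1 : Real.exp (-(c * |k| ^ β)) ≤ 1 := by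
    rw [Real.exp_le_one_iff, neg_nonpos]; exact hu
  rw [show (2 + 2 * B) * (1 + k ^ 2)⁻¹ = (2 + 2 * B) / (1 + k ^ 2) by ring, le_div_iff₀ hk2]
  rcases le_or_gt (|k|) 1 with hk | hk
  · have : k ^ 2 ≤ 1 := by nlinarith [_root_.sq_abs k, abs_nonneg k]
    nlinarith [Real.exp_pos (-(c * |k| ^ β))]
  · have hmb : 2 ≤ β * m := by
      have h := Nat.le_ceil (2 / β)
      rw [div_le_iff₀ hβ0] at h
      calc (2:ℝ) ≤ (m:ℝ) * β := h
        _ = β * m := by ring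
    have hkpow : k ^ 2 ≤ |k| ^ (β * (m:ℝ)) := by
      calc k ^ 2 = |k| ^ (2:ℝ) := by
            rw [show ((2:ℝ) = ((2:ℕ):ℝ)) by norm_num, Real.rpow_natCast, _root_.sq_abs]
        _ ≤ |k| ^ (β * (m:ℝ)) := Real.rpow_le_rpow_of_exponent_le hk.le hmb
    have hum : (c * |k| ^ β) ^ m = c ^ m * |k| ^ (β * (m:ℝ)) := by
      rw [mul_pow, ← Real.rpow_natCast (|k| ^ β) m, ← Real.rpow_mul (abs_nonneg k)]
    have hpow := pow_le_factorial_mul_exp hu m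
    -- exp(-u) * u^m ≤ m!
    have haE : Real.exp (-(c * |k| ^ β)) * Real.exp (c * |k| ^ β) = 1 := by
      rw [← Real.exp_add]; simp
    have h4 : Real.exp (-(c * |k| ^ β)) * k ^ 2 ≤ B := by
      rw [hB, le_div_iff₀ hcm]
      have e1 : Real.exp (-(c * |k| ^ β)) * k ^ 2 * c ^ m ≤
          Real.exp (-(c * |k| ^ β)) * ((c * |k| ^ β) ^ m) := by
        rw [hum]
        have := mul_le_mul_of_nonneg_left hkpow (Real.exp_pos (-(c * |k| ^ β))).le
        nlinarith [Real.exp_pos (-(c * |k| ^ β))]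
      refine e1.trans ?_
      calc Real.exp (-(c * |k| ^ β)) * (c * |k| ^ β) ^ m
          ≤ Real.exp (-(c * |k| ^ β)) * ((m.factorial : ℝ) * Real.exp (c * |k| ^ β)) :=
            mul_le_mul_of_nonneg_left hpow (Real.exp_pos _).le
        _ = (m.factorial : ℝ) := by
            rw [show Real.exp (-(c * |k| ^ β)) * ((m.factorial : ℝ) * Real.exp (c * |k| ^ β))
              = (Real.exp (-(c * |k| ^ β)) * Real.exp (c * |k| ^ β)) * (m.factorial : ℝ) by ring,
              haE, one_mul]
    nlinarith [Real.exp_pos (-(c * |k| ^ β))]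

lemma integrable_exp_neg_abs_rpow {β c : ℝ} (hβ0 : 0 < β) (hc : 0 < c) :
    Integrable (fun k : ℝ => Real.exp (-(c * |k| ^ β))) := by
  obtain ⟨C, hC, hbd⟩ := exp_neg_rpow_bound hβ0 hc
  have hcont : Continuous (fun k : ℝ => Real.exp (-(c * |k| ^ β))) := by
    apply Real.continuous_exp.comp
    apply Continuous.neg
    apply Continuous.mul continuous_const
    exact continuous_abs.rpow_const (fun x => Or.inr hβ0.le)
  refine Integrable.mono' ((integrable_inv_one_add_sq).const_mul C) hcont.aestronglyMeasurable ?_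
  refine ae_of_all _ (fun k => ?_)
  rw [Real.norm_eq_abs, abs_of_pos (Real.exp_pos _)]
  exact hbd k






noncomputable def gf (β : ℝ) (z : ℂ) : ℂ := Complex.exp (-z ^ (β : ℂ)) / (2 - z)

lemma gf_differentiableAt {β : ℝ} {z : ℂ} (hz : 0 < z.re) (h2 : z ≠ 2) :
    DifferentiableAt ℂ (gf β) z := by
  unfold gf
  apply DifferentiableAt.div
  · exact (((differentiableAt_id.cpow (differentiableAt_const _)
      (Complex.mem_slitPlane_iff.mpr (Or.inl hz)))).neg).cexp
  · exact (differentiableAt_const _).sub differentiableAt_id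
  · rw [sub_ne_zero]
    exact fun h => h2 (h.symm)

lemma line_re {σ k : ℝ} : ((σ : ℂ) + (k : ℂ) * Complex.I).re = σ := by simp

lemma line_im {σ k : ℝ} : ((σ : ℂ) + (k : ℂ) * Complex.I).im = k := by simp

lemma line_ne_two {σ k : ℝ} (hσ : σ ≠ 2) : (σ : ℂ) + (k : ℂ) * Complex.I ≠ 2 := by
  intro h
  apply hσ
  have := congrArg Complex.re h
  simpa using this

lemma gf_line_continuous {β σ : ℝ} (hσ0 : 0 < σ) (hσ2 : σ ≠ 2) :
    Continuous (fun k : ℝ => gf β ((σ : ℂ) + (k : ℂ) * Complex.I)) := by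
  rw [continuous_iff_continuousAt]
  intro k
  have hd : DifferentiableAt ℂ (gf β) ((σ : ℂ) + (k : ℂ) * Complex.I) :=
    gf_differentiableAt (by rwa [line_re]) (line_ne_two hσ2)
  have hcont : ContinuousAt (fun k : ℝ => (σ : ℂ) + (k : ℂ) * Complex.I) k := by fun_prop
  exact ContinuousAt.comp (x := k) (g := gf β) hd.continuousAt hcont

lemma gf_line_bound {β σ : ℝ} (hβ0 : 0 < β) (hβ1 : β < 1) (hσ1 : 1 ≤ σ) (hσ2 : σ ≠ 2) (k : ℝ) :
    ‖gf β ((σ : ℂ) + (k : ℂ) * Complex.I)‖ ≤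
      (Real.exp (-(Real.cos (β * (π / 2)) / 2 * σ ^ β)) / |2 - σ|) *
        Real.exp (-(Real.cos (β * (π / 2)) / 2 * |k| ^ β)) := by
  set z : ℂ := (σ : ℂ) + (k : ℂ) * Complex.I with hz
  have hzre : z.re = σ := line_re
  have hzim : z.im = k := line_im
  have habs : |2 - σ| ≤ ‖2 - z‖ := by
    have : (2 - z).re = 2 - σ := by rw [Complex.sub_re, hzre]; simp
    calc |2 - σ| = |(2 - z).re| := by rw [this]
      _ ≤ ‖2 - z‖ := Complex.abs_re_le_norm _
  have hne : ‖2 - z‖ ≠ 0 := by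
    intro h
    rw [norm_eq_zero] at h
    exact line_ne_two hσ2 (sub_eq_zero.mp h).symm
  have h20 : (0:ℝ) < |2 - σ| := by
    rw [abs_pos]
    intro h
    exact hσ2 (by linarith)
  unfold gf
  rw [norm_div]
  have hnum := abs_exp_neg_cpow_split (β := β) hβ0 hβ1 (z := z) (by rw [hzre]; linarith)
  rw [hzre, hzim] at hnum
  calc ‖Complex.exp (-z ^ (β : ℂ))‖ / ‖2 - z‖
      ≤ (Real.exp (-(Real.cos (β * (π / 2)) / 2 * σ ^ β)) *
          Real.exp (-(Real.cos (β * (π / 2)) / 2 * |k| ^ β))) / |2 - σ| :=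
        div_le_div₀ (by positivity) hnum h20 habs
    _ = (Real.exp (-(Real.cos (β * (π / 2)) / 2 * σ ^ β)) / |2 - σ|) *
          Real.exp (-(Real.cos (β * (π / 2)) / 2 * |k| ^ β)) := by ring


lemma gf_line_integrable {β σ : ℝ} (hβ0 : 0 < β) (hβ1 : β < 1) (hσ1 : 1 ≤ σ) (hσ2 : σ ≠ 2) :
    Integrable (fun k : ℝ => gf β ((σ : ℂ) + (k : ℂ) * Complex.I)) := by
  have hc2 : 0 < Real.cos (β * (π / 2)) / 2 := half_pos (c_pos hβ0 hβ1)
  refine Integrable.mono'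
    ((integrable_exp_neg_abs_rpow hβ0 hc2).const_mul
      (Real.exp (-(Real.cos (β * (π / 2)) / 2 * σ ^ β)) / |2 - σ|))
    (gf_line_continuous (by linarith) hσ2).aestronglyMeasurable
    (ae_of_all _ (fun k => gf_line_bound hβ0 hβ1 hσ1 hσ2 k))

lemma phi_norm_le {β σ : ℝ} (hβ0 : 0 < β) (hβ1 : β < 1) (hσ : 3 ≤ σ) :
    ‖∫ k : ℝ, gf β ((σ : ℂ) + (k : ℂ) * Complex.I)‖ ≤
      Real.exp (-(Real.cos (β * (π / 2)) / 2 * σ ^ β)) *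
        ∫ k : ℝ, Real.exp (-(Real.cos (β * (π / 2)) / 2 * |k| ^ β)) := by
  have hc2 : 0 < Real.cos (β * (π / 2)) / 2 := half_pos (c_pos hβ0 hβ1)
  have h2σ : 1 ≤ |2 - σ| := by
    rw [abs_sub_comm, _root_.abs_of_nonneg (by linarith)]; linarith
  have h1 : ∀ k : ℝ, ‖gf β ((σ : ℂ) + (k : ℂ) * Complex.I)‖ ≤
      Real.exp (-(Real.cos (β * (π / 2)) / 2 * σ ^ β)) *
        Real.exp (-(Real.cos (β * (π / 2)) / 2 * |k| ^ β)) := fun k =>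
    (gf_line_bound hβ0 hβ1 (by linarith) (by intro h; linarith) k).trans
      (mul_le_mul_of_nonneg_right (div_le_self (Real.exp_pos _).le h2σ) (Real.exp_pos _).le)
  calc ‖∫ k : ℝ, gf β ((σ : ℂ) + (k : ℂ) * Complex.I)‖
      ≤ ∫ k : ℝ, Real.exp (-(Real.cos (β * (π / 2)) / 2 * σ ^ β)) *
          Real.exp (-(Real.cos (β * (π / 2)) / 2 * |k| ^ β)) :=
        norm_integral_le_of_norm_le
          ((integrable_exp_neg_abs_rpow hβ0 hc2).const_mul _) (ae_of_all _ h1)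
    _ = _ := MeasureTheory.integral_const_mul _ _

lemma phi_tendsto_zero {β : ℝ} (hβ0 : 0 < β) (hβ1 : β < 1) :
    Tendsto (fun σ : ℝ => ∫ k : ℝ, gf β ((σ : ℂ) + (k : ℂ) * Complex.I)) atTop (𝓝 0) := by
  have hc2 : 0 < Real.cos (β * (π / 2)) / 2 := half_pos (c_pos hβ0 hβ1)
  apply squeeze_zero_norm'
    ((eventually_ge_atTop (3:ℝ)).mono (fun σ hσ => phi_norm_le hβ0 hβ1 hσ))
  have h1 : Tendsto (fun σ : ℝ => Real.exp (-(Real.cos (β * (π / 2)) / 2 * σ ^ β)))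
      atTop (𝓝 0) := by
    apply Real.tendsto_exp_atBot.comp
    apply tendsto_neg_atTop_atBot.comp
    exact (tendsto_rpow_atTop hβ0).const_mul_atTop hc2
  have := h1.mul_const (∫ k : ℝ, Real.exp (-(Real.cos (β * (π / 2)) / 2 * |k| ^ β)))
  rwa [zero_mul] at this
lemma gf_horiz_bound {β : ℝ} (hβ0 : 0 < β) (hβ1 : β < 1) {x y : ℝ} (hx : 0 < x) (hy : y ≠ 0) :
    ‖gf β ((x : ℂ) + (y : ℂ) * Complex.I)‖ ≤ 1 / |y| := by
  set z : ℂ := (x : ℂ) + (y : ℂ) * Complex.I with hz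
  have hzre : z.re = x := line_re
  have habs : |y| ≤ ‖2 - z‖ := by
    have him : (2 - z).im = -y := by simp [hz]
    calc |y| = |(2 - z).im| := by rw [him, abs_neg]
      _ ≤ ‖2 - z‖ := Complex.abs_im_le_norm _
  have hypos : 0 < |y| := abs_pos.mpr hy
  unfold gf
  rw [norm_div]
  apply div_le_div₀ (by norm_num)
    (abs_exp_neg_cpow_le_one hβ0 hβ1 (by rwa [hzre])) hypos habs

lemma rect_gf {β X : ℝ} (hβ0 : 0 < β) (hβ1 : β < 1) (hX : 3 ≤ X) :
    ∫ k : ℝ, gf β ((3 : ℂ) + (k : ℂ) * Complex.I)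
      = ∫ k : ℝ, gf β ((X : ℂ) + (k : ℂ) * Complex.I) := by
  have key : ∀ T : ℝ,
      ((∫ x : ℝ in (3:ℝ)..X, gf β ((x : ℂ) + (-T : ℝ) * Complex.I)) -
        (∫ x : ℝ in (3:ℝ)..X, gf β ((x : ℂ) + (T : ℝ) * Complex.I))) +
        (Complex.I • ∫ y : ℝ in (-T:ℝ)..T, gf β ((X : ℂ) + (y : ℂ) * Complex.I)) -
        Complex.I • ∫ y : ℝ in (-T:ℝ)..T, gf β ((3 : ℂ) + (y : ℂ) * Complex.I) = 0 := by
    intro T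
    have hrect := Complex.integral_boundary_rect_eq_zero_of_differentiableOn (gf β)
      ((3 : ℂ) - (T : ℂ) * Complex.I) ((X : ℂ) + (T : ℂ) * Complex.I) ?_
    · have h1 : ((3 : ℂ) - (T : ℂ) * Complex.I).re = 3 := by simp
      have h2 : ((3 : ℂ) - (T : ℂ) * Complex.I).im = -T := by simp
      have h3 : ((X : ℂ) + (T : ℂ) * Complex.I).re = X := by simp
      have h4 : ((X : ℂ) + (T : ℂ) * Complex.I).im = T := by simp
      rw [h1, h2, h3, h4] at hrect
      simpa using hrect
    · intro u hu
      rw [Complex.mem_reProdIm] at hu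
      obtain ⟨hure, _⟩ := hu
      have h1 : ((3 : ℂ) - (T : ℂ) * Complex.I).re = 3 := by simp
      have h3 : ((X : ℂ) + (T : ℂ) * Complex.I).re = X := by simp
      rw [h1, h3, Set.uIcc_of_le hX] at hure
      have hure3 : 3 ≤ u.re := hure.1
      refine (gf_differentiableAt (by linarith) ?_).differentiableWithinAt
      intro h
      rw [h] at hure3
      norm_num at hure3
  -- limits
  have hV3 : Tendsto (fun T : ℝ => ∫ y : ℝ in (-T:ℝ)..T, gf β ((3 : ℂ) + (y : ℂ) * Complex.I))
      atTop (𝓝 (∫ k : ℝ, gf β ((3 : ℂ) + (k : ℂ) * Complex.I))) :=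
    intervalIntegral_tendsto_integral
      (gf_line_integrable hβ0 hβ1 (by norm_num) (by norm_num))
      tendsto_neg_atTop_atBot tendsto_id
  have hVX : Tendsto (fun T : ℝ => ∫ y : ℝ in (-T:ℝ)..T, gf β ((X : ℂ) + (y : ℂ) * Complex.I))
      atTop (𝓝 (∫ k : ℝ, gf β ((X : ℂ) + (k : ℂ) * Complex.I))) :=
    intervalIntegral_tendsto_integral
      (gf_line_integrable hβ0 hβ1 (by linarith) (by intro h; linarith))
      tendsto_neg_atTop_atBot tendsto_id
  have hhoriz : ∀ s : ℝ → ℝ, (∀ T, s T = T ∨ s T = -T) →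
      Tendsto (fun T : ℝ => ∫ x : ℝ in (3:ℝ)..X, gf β ((x : ℂ) + (s T : ℝ) * Complex.I))
        atTop (𝓝 0) := by
    intro s hs
    apply squeeze_zero_norm' (a := fun T : ℝ => 1 / T * |X - 3|)
    · filter_upwards [eventually_gt_atTop (0:ℝ)] with T hT
      have hsT : |s T| = T := by
        rcases hs T with h | h
        · rw [h]; exact _root_.abs_of_pos hT
        · rw [h, abs_neg]; exact _root_.abs_of_pos hT
      apply intervalIntegral.norm_integral_le_of_norm_le_const
      intro x hx
      rw [Set.uIoc_of_le hX] at hx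
      have : ‖gf β ((x : ℂ) + (s T : ℝ) * Complex.I)‖ ≤ 1 / |s T| :=
        gf_horiz_bound hβ0 hβ1 (by linarith [hx.1]) (by rw [← _root_.abs_pos, hsT]; exact hT)
      rwa [hsT] at this
    · have := (tendsto_inv_atTop_zero (𝕜 := ℝ)).mul_const |X - 3|
      rw [zero_mul] at this
      simpa [one_div] using this
  have hA := hhoriz (fun T => -T) (fun T => Or.inr rfl)
  have hB := hhoriz (fun T => T) (fun T => Or.inl rfl)
  have hcomb : Tendsto (fun T : ℝ =>
      ((∫ x : ℝ in (3:ℝ)..X, gf β ((x : ℂ) + (-T : ℝ) * Complex.I)) -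
        (∫ x : ℝ in (3:ℝ)..X, gf β ((x : ℂ) + (T : ℝ) * Complex.I))) +
        (Complex.I • ∫ y : ℝ in (-T:ℝ)..T, gf β ((X : ℂ) + (y : ℂ) * Complex.I)) -
        Complex.I • ∫ y : ℝ in (-T:ℝ)..T, gf β ((3 : ℂ) + (y : ℂ) * Complex.I)) atTop
      (𝓝 (((0 - 0) + Complex.I • ∫ k : ℝ, gf β ((X : ℂ) + (k : ℂ) * Complex.I)) -
        Complex.I • ∫ k : ℝ, gf β ((3 : ℂ) + (k : ℂ) * Complex.I))) :=
    (((hA.sub hB).add (hVX.const_smul Complex.I)).sub (hV3.const_smul Complex.I))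
  have hzero : Tendsto (fun T : ℝ =>
      ((∫ x : ℝ in (3:ℝ)..X, gf β ((x : ℂ) + (-T : ℝ) * Complex.I)) -
        (∫ x : ℝ in (3:ℝ)..X, gf β ((x : ℂ) + (T : ℝ) * Complex.I))) +
        (Complex.I • ∫ y : ℝ in (-T:ℝ)..T, gf β ((X : ℂ) + (y : ℂ) * Complex.I)) -
        Complex.I • ∫ y : ℝ in (-T:ℝ)..T, gf β ((3 : ℂ) + (y : ℂ) * Complex.I)) atTop
      (𝓝 0) := Tendsto.congr (fun T => (key T).symm) tendsto_const_nhds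
  have heq := tendsto_nhds_unique hcomb hzero
  rw [sub_eq_zero] at heq
  have heq2 : Complex.I * (∫ k : ℝ, gf β ((X : ℂ) + (k : ℂ) * Complex.I))
      = Complex.I * ∫ k : ℝ, gf β ((3 : ℂ) + (k : ℂ) * Complex.I) := by
    simpa [smul_eq_mul] using heq
  exact (mul_left_cancel₀ Complex.I_ne_zero heq2).symm
noncomputable def hf (β : ℝ) (z : ℂ) : ℂ :=
  if z = 2 then (β : ℂ) * (2 : ℂ) ^ ((β : ℂ) - 1) * Complex.exp (-(2 : ℂ) ^ (β : ℂ))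
  else (Complex.exp (-z ^ (β : ℂ)) - Complex.exp (-(2 : ℂ) ^ (β : ℂ))) / (2 - z)

lemma hf_eq {β : ℝ} {z : ℂ} (h : z ≠ 2) :
    hf β z = (Complex.exp (-z ^ (β : ℂ)) - Complex.exp (-(2 : ℂ) ^ (β : ℂ))) / (2 - z) :=
  if_neg h

lemma hf_eq' {β : ℝ} {z : ℂ} (h : z ≠ 2) :
    hf β z = gf β z - Complex.exp (-(2 : ℂ) ^ (β : ℂ)) / (2 - z) := by
  rw [hf_eq h, gf, sub_div]

lemma two_mem_slitPlane : (2 : ℂ) ∈ Complex.slitPlane := by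
  rw [Complex.mem_slitPlane_iff]
  left; norm_num

lemma hf_differentiableAt {β : ℝ} {z : ℂ} (hz : 0 < z.re) (h2 : z ≠ 2) :
    DifferentiableAt ℂ (hf β) z := by
  have hform : DifferentiableAt ℂ
      (fun w => (Complex.exp (-w ^ (β : ℂ)) - Complex.exp (-(2 : ℂ) ^ (β : ℂ))) / (2 - w)) z := by
    apply DifferentiableAt.div
    · exact ((differentiableAt_id.cpow (differentiableAt_const _)
        (Complex.mem_slitPlane_iff.mpr (Or.inl hz))).neg.cexp).sub (differentiableAt_const _)
    · exact (differentiableAt_const _).sub differentiableAt_id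
    · rw [sub_ne_zero]; exact fun h => h2 h.symm
  apply hform.congr_of_eventuallyEq
  filter_upwards [isOpen_ne.mem_nhds h2] with w hw
  exact hf_eq hw

lemma hf_continuousAt_two {β : ℝ} (hβ0 : 0 < β) (hβ1 : β < 1) :
    ContinuousAt (hf β) 2 := by
  have h1 : HasDerivAt (fun z : ℂ => z ^ (β : ℂ)) ((β : ℂ) * (2 : ℂ) ^ ((β : ℂ) - 1)) 2 :=
    (Complex.hasStrictDerivAt_cpow_const two_mem_slitPlane).hasDerivAt
  have h3 : HasDerivAt (fun z : ℂ => Complex.exp (-z ^ (β : ℂ)))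
      (Complex.exp (-(2 : ℂ) ^ (β : ℂ)) * -((β : ℂ) * (2 : ℂ) ^ ((β : ℂ) - 1))) 2 := h1.neg.cexp
  have h4 := hasDerivAt_iff_tendsto_slope.mp h3
  have h5 : Tendsto (hf β) (𝓝[≠] (2 : ℂ)) (𝓝 (hf β 2)) := by
    have hcongr : (fun w => -slope (fun z : ℂ => Complex.exp (-z ^ (β : ℂ))) 2 w)
        =ᶠ[𝓝[≠] (2 : ℂ)] hf β := by
      filter_upwards [self_mem_nhdsWithin] with w hw
      have hw' : w ≠ 2 := hw
      rw [slope_def_field, hf_eq hw', show (2 : ℂ) - w = -(w - 2) by ring, div_neg]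
    have hval : hf β 2 = -(Complex.exp (-(2 : ℂ) ^ (β : ℂ)) *
        -((β : ℂ) * (2 : ℂ) ^ ((β : ℂ) - 1))) := by
      rw [hf, if_pos rfl]; ring
    rw [hval]
    exact Tendsto.congr' hcongr h4.neg
  rw [ContinuousAt, ← nhdsNE_sup_pure (2 : ℂ)]
  rw [tendsto_sup]
  exact ⟨h5, tendsto_pure_nhds _ _⟩

lemma hf_line_continuous {β σ : ℝ} (hσ0 : 0 < σ) (hσ2 : σ ≠ 2) :
    Continuous (fun k : ℝ => hf β ((σ : ℂ) + (k : ℂ) * Complex.I)) := by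
  rw [continuous_iff_continuousAt]
  intro k
  have hd : DifferentiableAt ℂ (hf β) ((σ : ℂ) + (k : ℂ) * Complex.I) :=
    hf_differentiableAt (by rw [line_re]; exact hσ0) (line_ne_two hσ2)
  have hcont : ContinuousAt (fun k : ℝ => (σ : ℂ) + (k : ℂ) * Complex.I) k := by fun_prop
  exact ContinuousAt.comp (x := k) (g := hf β) hd.continuousAt hcont

lemma one_sub_mul_I_ne {k : ℝ} : (1 : ℂ) - (k : ℂ) * Complex.I ≠ 0 := by
  intro h
  have := congrArg Complex.re h
  simp at this

lemma one_add_mul_I_ne {k : ℝ} : (1 : ℂ) + (k : ℂ) * Complex.I ≠ 0 := by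
  intro h
  have := congrArg Complex.re h
  simp at this

lemma inv_sum_identity (k : ℝ) :
    1 / ((1 : ℂ) - (k : ℂ) * Complex.I) + 1 / ((1 : ℂ) + (k : ℂ) * Complex.I)
      = (((2 * (1 + k ^ 2)⁻¹ : ℝ)) : ℂ) := by
  have hprod : ((1 : ℂ) - (k : ℂ) * Complex.I) * ((1 : ℂ) + (k : ℂ) * Complex.I)
      = (((1 + k ^ 2 : ℝ)) : ℂ) := by
    push_cast
    ring_nf
    rw [Complex.I_sq]
    ring
  have hne : (((1 + k ^ 2 : ℝ)) : ℂ) ≠ 0 := by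
    rw [Complex.ofReal_ne_zero]
    positivity
  rw [div_add_div _ _ one_sub_mul_I_ne one_add_mul_I_ne, hprod]
  have h2 : (((2 * (1 + k ^ 2)⁻¹ : ℝ)) : ℂ) = 2 / (((1 + k ^ 2 : ℝ)) : ℂ) := by
    push_cast
    ring
  rw [h2, div_eq_div_iff hne hne]
  push_cast
  ring
lemma one_line_ne_two {k : ℝ} : (1 : ℂ) + (k : ℂ) * Complex.I ≠ 2 := line_ne_two (by norm_num)

lemma three_line_ne_two {k : ℝ} : (3 : ℂ) + (k : ℂ) * Complex.I ≠ 2 := by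
  have := line_ne_two (σ := 3) (k := k) (by norm_num)
  simpa using this

lemma hf_diff_decomp {β : ℝ} (k : ℝ) :
    hf β ((1 : ℂ) + (k : ℂ) * Complex.I) - hf β ((3 : ℂ) + (k : ℂ) * Complex.I)
      = gf β ((1 : ℂ) + (k : ℂ) * Complex.I) - gf β ((3 : ℂ) + (k : ℂ) * Complex.I)
        - Complex.exp (-(2 : ℂ) ^ (β : ℂ)) * (((2 * (1 + k ^ 2)⁻¹ : ℝ)) : ℂ) := by
  rw [hf_eq' one_line_ne_two, hf_eq' three_line_ne_two, ← inv_sum_identity k]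
  have h1 : (2 : ℂ) - ((1 : ℂ) + (k : ℂ) * Complex.I) = 1 - (k : ℂ) * Complex.I := by ring
  have h2 : (2 : ℂ) - ((3 : ℂ) + (k : ℂ) * Complex.I) = -(1 + (k : ℂ) * Complex.I) := by ring
  rw [h1, h2]
  have h3 : Complex.exp (-(2 : ℂ) ^ (β : ℂ)) / -(1 + (k : ℂ) * Complex.I)
      = -(Complex.exp (-(2 : ℂ) ^ (β : ℂ)) / (1 + (k : ℂ) * Complex.I)) := by
    rw [div_neg]
  rw [h3]
  field_simp
  ring

lemma const_integrable {β : ℝ} :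
    Integrable (fun k : ℝ => Complex.exp (-(2 : ℂ) ^ (β : ℂ)) *
      (((2 * (1 + k ^ 2)⁻¹ : ℝ)) : ℂ)) := by
  apply Integrable.const_mul
  exact (integrable_inv_one_add_sq.const_mul 2).ofReal

lemma D_integrable {β : ℝ} (hβ0 : 0 < β) (hβ1 : β < 1) :
    Integrable (fun k : ℝ => hf β ((1 : ℂ) + (k : ℂ) * Complex.I)
      - hf β ((3 : ℂ) + (k : ℂ) * Complex.I)) := by
  have hfun : (fun k : ℝ => hf β ((1 : ℂ) + (k : ℂ) * Complex.I)
      - hf β ((3 : ℂ) + (k : ℂ) * Complex.I))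
      = fun k : ℝ => gf β ((1 : ℂ) + (k : ℂ) * Complex.I)
        - gf β ((3 : ℂ) + (k : ℂ) * Complex.I)
        - Complex.exp (-(2 : ℂ) ^ (β : ℂ)) * (((2 * (1 + k ^ 2)⁻¹ : ℝ)) : ℂ) :=
    funext (fun k => hf_diff_decomp k)
  rw [hfun]
  exact ((gf_line_integrable hβ0 hβ1 le_rfl (by norm_num)).sub
    (gf_line_integrable hβ0 hβ1 (by norm_num) (by norm_num))).sub const_integrable

lemma abs_e2_le_one {β : ℝ} (hβ0 : 0 < β) (hβ1 : β < 1) :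
    ‖Complex.exp (-(2 : ℂ) ^ (β : ℂ))‖ ≤ 1 :=
  abs_exp_neg_cpow_le_one hβ0 hβ1 (by norm_num)

lemma hf_horiz_bound {β : ℝ} (hβ0 : 0 < β) (hβ1 : β < 1) {x y : ℝ} (hx : 0 < x) (hy : y ≠ 0) :
    ‖hf β ((x : ℂ) + (y : ℂ) * Complex.I)‖ ≤ 2 / |y| := by
  set z : ℂ := (x : ℂ) + (y : ℂ) * Complex.I with hz
  have hz2 : z ≠ 2 := by
    intro h
    have := congrArg Complex.im h
    simp [hz] at this
    exact hy this
  have habs : |y| ≤ ‖2 - z‖ := by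
    have him : (2 - z).im = -y := by simp [hz]
    calc |y| = |(2 - z).im| := by rw [him, abs_neg]
      _ ≤ ‖2 - z‖ := Complex.abs_im_le_norm _
  have hypos : 0 < |y| := abs_pos.mpr hy
  rw [hf_eq hz2, norm_div]
  apply div_le_div₀ (by norm_num) ?_ hypos habs
  calc ‖Complex.exp (-z ^ (β : ℂ)) - Complex.exp (-(2 : ℂ) ^ (β : ℂ))‖
      ≤ ‖Complex.exp (-z ^ (β : ℂ))‖
        + ‖Complex.exp (-(2 : ℂ) ^ (β : ℂ))‖ := norm_sub_le _ _
    _ ≤ 1 + 1 := add_le_add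
        (abs_exp_neg_cpow_le_one hβ0 hβ1 (by rw [hz, line_re]; exact hx))
        (abs_e2_le_one hβ0 hβ1)
    _ = 2 := by norm_num
lemma rect_hf {β : ℝ} (hβ0 : 0 < β) (hβ1 : β < 1) :
    ∫ k : ℝ, (hf β ((3 : ℂ) + (k : ℂ) * Complex.I) - hf β ((1 : ℂ) + (k : ℂ) * Complex.I)) = 0 := by
  have key : ∀ T : ℝ,
      ((∫ x : ℝ in (1:ℝ)..3, hf β ((x : ℂ) + (-T : ℝ) * Complex.I)) -
        (∫ x : ℝ in (1:ℝ)..3, hf β ((x : ℂ) + (T : ℝ) * Complex.I))) +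
        (Complex.I • ∫ y : ℝ in (-T:ℝ)..T, hf β ((3 : ℂ) + (y : ℂ) * Complex.I)) -
        Complex.I • ∫ y : ℝ in (-T:ℝ)..T, hf β ((1 : ℂ) + (y : ℂ) * Complex.I) = 0 := by
    intro T
    have hrect := Complex.integral_boundary_rect_eq_zero_of_differentiable_on_off_countable
      (hf β) ((1 : ℂ) - (T : ℂ) * Complex.I) ((3 : ℂ) + (T : ℂ) * Complex.I) {2}
      (Set.countable_singleton 2) ?_ ?_
    · have h1 : ((1 : ℂ) - (T : ℂ) * Complex.I).re = 1 := by simp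
      have h2 : ((1 : ℂ) - (T : ℂ) * Complex.I).im = -T := by simp
      have h3 : ((3 : ℂ) + (T : ℂ) * Complex.I).re = 3 := by simp
      have h4 : ((3 : ℂ) + (T : ℂ) * Complex.I).im = T := by simp
      rw [h1, h2, h3, h4] at hrect
      simpa using hrect
    · -- continuity on closed rectangle
      intro u hu
      rw [Complex.mem_reProdIm] at hu
      obtain ⟨hure, _⟩ := hu
      have h1 : ((1 : ℂ) - (T : ℂ) * Complex.I).re = 1 := by simp
      have h3 : ((3 : ℂ) + (T : ℂ) * Complex.I).re = 3 := by simp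
      rw [h1, h3, Set.uIcc_of_le (by norm_num : (1:ℝ) ≤ 3)] at hure
      by_cases hu2 : u = 2
      · rw [hu2]
        exact (hf_continuousAt_two hβ0 hβ1).continuousWithinAt
      · exact (hf_differentiableAt (by linarith [hure.1]) hu2).continuousAt.continuousWithinAt
    · -- differentiability off {2}
      intro u hu
      obtain ⟨hu1, hu2⟩ := hu
      rw [Complex.mem_reProdIm] at hu1
      have h1 : ((1 : ℂ) - (T : ℂ) * Complex.I).re = 1 := by simp
      have h3 : ((3 : ℂ) + (T : ℂ) * Complex.I).re = 3 := by simp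
      rw [h1, h3] at hu1
      have hure : u.re ∈ Set.Ioo (1:ℝ) 3 := by
        have := hu1.1
        rwa [min_eq_left (by norm_num : (1:ℝ) ≤ 3), max_eq_right (by norm_num : (1:ℝ) ≤ 3)]
          at this
      exact hf_differentiableAt (by linarith [hure.1]) (by simpa using hu2)
  -- horizontal limits
  have hhoriz : ∀ s : ℝ → ℝ, (∀ T, s T = T ∨ s T = -T) →
      Tendsto (fun T : ℝ => ∫ x : ℝ in (1:ℝ)..3, hf β ((x : ℂ) + (s T : ℝ) * Complex.I))
        atTop (𝓝 0) := by
    intro s hs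
    apply squeeze_zero_norm' (a := fun T : ℝ => 2 / T * |3 - 1|)
    · filter_upwards [eventually_gt_atTop (0:ℝ)] with T hT
      have hsT : |s T| = T := by
        rcases hs T with h | h
        · rw [h]; exact _root_.abs_of_pos hT
        · rw [h, abs_neg]; exact _root_.abs_of_pos hT
      apply intervalIntegral.norm_integral_le_of_norm_le_const
      intro x hx
      rw [Set.uIoc_of_le (by norm_num : (1:ℝ) ≤ 3)] at hx
      have : ‖hf β ((x : ℂ) + (s T : ℝ) * Complex.I)‖ ≤ 2 / |s T| :=
        hf_horiz_bound hβ0 hβ1 (by linarith [hx.1]) (by rw [← _root_.abs_pos, hsT]; exact hT)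
      rwa [hsT] at this
    · have := ((tendsto_inv_atTop_zero (𝕜 := ℝ)).const_mul (2:ℝ)).mul_const |(3:ℝ) - 1|
      rw [mul_zero, zero_mul] at this
      simpa [div_eq_mul_inv] using this
  have hA := hhoriz (fun T => -T) (fun T => Or.inr rfl)
  have hB := hhoriz (fun T => T) (fun T => Or.inl rfl)
  -- vertical difference limit
  have hVdiff : Tendsto (fun T : ℝ => ∫ y : ℝ in (-T:ℝ)..T,
      (hf β ((3 : ℂ) + (y : ℂ) * Complex.I) - hf β ((1 : ℂ) + (y : ℂ) * Complex.I)))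
      atTop (𝓝 (∫ k : ℝ,
        (hf β ((3 : ℂ) + (k : ℂ) * Complex.I) - hf β ((1 : ℂ) + (k : ℂ) * Complex.I)))) := by
    apply intervalIntegral_tendsto_integral _ tendsto_neg_atTop_atBot tendsto_id
    have := (D_integrable hβ0 hβ1).neg
    refine this.congr (ae_of_all _ (fun k => ?_))
    simp only [Pi.neg_apply]
    ring
  -- rewrite key using interval integral subtraction
  have key2 : ∀ T : ℝ,
      Complex.I • (∫ y : ℝ in (-T:ℝ)..T,
        (hf β ((3 : ℂ) + (y : ℂ) * Complex.I) - hf β ((1 : ℂ) + (y : ℂ) * Complex.I)))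
      = ((∫ x : ℝ in (1:ℝ)..3, hf β ((x : ℂ) + (T : ℝ) * Complex.I)) -
          (∫ x : ℝ in (1:ℝ)..3, hf β ((x : ℂ) + (-T : ℝ) * Complex.I))) := by
    intro T
    have hint3 : IntervalIntegrable (fun y : ℝ => hf β ((3 : ℂ) + (y : ℂ) * Complex.I))
        MeasureTheory.volume (-T) T :=
      (hf_line_continuous (by norm_num) (by norm_num)).intervalIntegrable _ _
    have hint1 : IntervalIntegrable (fun y : ℝ => hf β ((1 : ℂ) + (y : ℂ) * Complex.I))
        MeasureTheory.volume (-T) T :=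
      (hf_line_continuous (by norm_num) (by norm_num)).intervalIntegrable _ _
    rw [intervalIntegral.integral_sub hint3 hint1, smul_sub]
    have hk := key T
    have : Complex.I • (∫ y : ℝ in (-T:ℝ)..T, hf β ((3 : ℂ) + (y : ℂ) * Complex.I))
        - Complex.I • ∫ y : ℝ in (-T:ℝ)..T, hf β ((1 : ℂ) + (y : ℂ) * Complex.I)
        = (∫ x : ℝ in (1:ℝ)..3, hf β ((x : ℂ) + (T : ℝ) * Complex.I)) -
          (∫ x : ℝ in (1:ℝ)..3, hf β ((x : ℂ) + (-T : ℝ) * Complex.I)) := by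
      linear_combination hk
    exact this
  -- combine
  have hlim : Tendsto (fun T : ℝ =>
      ((∫ x : ℝ in (1:ℝ)..3, hf β ((x : ℂ) + (T : ℝ) * Complex.I)) -
        (∫ x : ℝ in (1:ℝ)..3, hf β ((x : ℂ) + (-T : ℝ) * Complex.I)))) atTop (𝓝 (0 - 0)) :=
    hB.sub hA
  have hlim2 : Tendsto (fun T : ℝ =>
      Complex.I • (∫ y : ℝ in (-T:ℝ)..T,
        (hf β ((3 : ℂ) + (y : ℂ) * Complex.I) - hf β ((1 : ℂ) + (y : ℂ) * Complex.I))))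
      atTop (𝓝 (Complex.I • ∫ k : ℝ,
        (hf β ((3 : ℂ) + (k : ℂ) * Complex.I) - hf β ((1 : ℂ) + (k : ℂ) * Complex.I)))) :=
    hVdiff.const_smul Complex.I
  have heq := tendsto_nhds_unique hlim2 (Tendsto.congr (fun T => (key2 T).symm) hlim)
  rw [sub_zero] at heq
  have heq2 : Complex.I * (∫ k : ℝ,
      (hf β ((3 : ℂ) + (k : ℂ) * Complex.I) - hf β ((1 : ℂ) + (k : ℂ) * Complex.I)))
      = Complex.I * 0 := by
    rw [mul_zero]
    simpa [smul_eq_mul] using heq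
  exact mul_left_cancel₀ Complex.I_ne_zero heq2
lemma phi3_eq_zero {β : ℝ} (hβ0 : 0 < β) (hβ1 : β < 1) :
    ∫ k : ℝ, gf β ((3 : ℂ) + (k : ℂ) * Complex.I) = 0 := by
  have h1 : Tendsto (fun σ : ℝ => ∫ k : ℝ, gf β ((σ : ℂ) + (k : ℂ) * Complex.I)) atTop
      (𝓝 (∫ k : ℝ, gf β ((3 : ℂ) + (k : ℂ) * Complex.I))) := by
    refine Tendsto.congr' ?_ tendsto_const_nhds
    filter_upwards [eventually_ge_atTop (3:ℝ)] with X hX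
    exact rect_gf hβ0 hβ1 hX
  exact tendsto_nhds_unique h1 (phi_tendsto_zero hβ0 hβ1)

lemma two_pi_integral :
    ∫ k : ℝ, (((2 * (1 + k ^ 2)⁻¹ : ℝ)) : ℂ) = ((2 * π : ℝ) : ℂ) := by
  have hreal : ∫ k : ℝ, 2 * (1 + k ^ 2)⁻¹ = 2 * π := by
    rw [MeasureTheory.integral_const_mul, integral_univ_inv_one_add_sq]
  rw [← hreal]
  exact _root_.integral_ofReal

lemma phi1_value {β : ℝ} (hβ0 : 0 < β) (hβ1 : β < 1) :
    ∫ k : ℝ, gf β ((1 : ℂ) + (k : ℂ) * Complex.I)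
      = Complex.exp (-(2 : ℂ) ^ (β : ℂ)) * ((2 * π : ℝ) : ℂ) := by
  have hdecomp : (fun k : ℝ => gf β ((1 : ℂ) + (k : ℂ) * Complex.I))
      = fun k : ℝ => (hf β ((1 : ℂ) + (k : ℂ) * Complex.I)
          - hf β ((3 : ℂ) + (k : ℂ) * Complex.I))
        + gf β ((3 : ℂ) + (k : ℂ) * Complex.I)
        + Complex.exp (-(2 : ℂ) ^ (β : ℂ)) * (((2 * (1 + k ^ 2)⁻¹ : ℝ)) : ℂ) := by
    funext k
    have := hf_diff_decomp (β := β) k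
    linear_combination -this
  have hI3 : Integrable (fun k : ℝ => gf β ((3 : ℂ) + (k : ℂ) * Complex.I)) := by
    have := gf_line_integrable (β := β) (σ := 3) hβ0 hβ1 (by norm_num) (by norm_num)
    simpa using this
  have hsum : Integrable (fun k : ℝ => (hf β ((1 : ℂ) + (k : ℂ) * Complex.I)
      - hf β ((3 : ℂ) + (k : ℂ) * Complex.I)) + gf β ((3 : ℂ) + (k : ℂ) * Complex.I)) :=
    (D_integrable hβ0 hβ1).add hI3
  rw [hdecomp]
  rw [MeasureTheory.integral_add hsum const_integrable,
    MeasureTheory.integral_add (D_integrable hβ0 hβ1) hI3]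
  have hD : ∫ k : ℝ, (hf β ((1 : ℂ) + (k : ℂ) * Complex.I)
      - hf β ((3 : ℂ) + (k : ℂ) * Complex.I)) = 0 := by
    have h := rect_hf hβ0 hβ1
    have : ∫ k : ℝ, (hf β ((1 : ℂ) + (k : ℂ) * Complex.I)
        - hf β ((3 : ℂ) + (k : ℂ) * Complex.I))
        = -∫ k : ℝ, (hf β ((3 : ℂ) + (k : ℂ) * Complex.I)
          - hf β ((1 : ℂ) + (k : ℂ) * Complex.I)) := by
      rw [← MeasureTheory.integral_neg]
      congr 1
      funext k
      ring
    rw [this, h, neg_zero]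
  rw [hD, phi3_eq_zero hβ0 hβ1, MeasureTheory.integral_const_mul, two_pi_integral]
  ring
open scoped ComplexInnerProductSpace

theorem lchs_kernel_at_time_zero (N : ℕ) (hN : 0 < N) (β : ℝ)
    (hβ : β ∈ Set.Ioo (0 : ℝ) 1)
    (L H : EuclideanSpace ℂ (Fin N) →L[ℂ] EuclideanSpace ℂ (Fin N))
    (hL : IsSelfAdjoint L) (hH : IsSelfAdjoint H)
    (hLneg : ∀ v, (⟪v, L v⟫).re ≤ 0) (k t : ℝ) :
    ‖NormedSpace.exp ((Complex.I * (t : ℂ)) • ((k : ℂ) • L + H))‖ = 1 ∧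
    ∫ x : ℝ, (1 / (2 * (Real.pi : ℂ) * Complex.exp (-(2 : ℂ) ^ (β : ℂ)) *
        Complex.exp ((1 + Complex.I * (x : ℂ)) ^ (β : ℂ)))) / (1 - Complex.I * (x : ℂ))
      = 1 := by
  obtain ⟨hβ0, hβ1⟩ := hβ
  constructor
  · haveI : Nonempty (Fin N) := ⟨⟨0, hN⟩⟩
    have hA : IsSelfAdjoint ((k : ℂ) • L + H) := by
      refine IsSelfAdjoint.add (R := EuclideanSpace ℂ (Fin N) →L[ℂ] EuclideanSpace ℂ (Fin N)) ?_ hH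
      exact IsSelfAdjoint.smul (by norm_num [IsSelfAdjoint, Complex.conj_ofReal]) hL
    have hsk : (Complex.I * (t : ℂ)) • ((k : ℂ) • L + H) ∈ skewAdjoint _ := by
      refine hA.smul_mem_skewAdjoint ?_
      rw [skewAdjoint.mem_iff]
      simp [Complex.conj_ofReal, mul_comm]
    letI : NormedAlgebra ℚ (EuclideanSpace ℂ (Fin N) →L[ℂ] EuclideanSpace ℂ (Fin N)) :=
      NormedAlgebra.restrictScalars ℚ ℂ _
    exact CStarRing.norm_of_mem_unitary
      (NormedSpace.exp_mem_unitary_of_mem_skewAdjoint hsk)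
  · have hπ : ((π : ℝ) : ℂ) ≠ 0 := by
      rw [Complex.ofReal_ne_zero]
      exact Real.pi_ne_zero
    have he2 : Complex.exp (-(2 : ℂ) ^ (β : ℂ)) ≠ 0 := Complex.exp_ne_zero _
    have hpt : ∀ x : ℝ,
        (1 / (2 * (Real.pi : ℂ) * Complex.exp (-(2 : ℂ) ^ (β : ℂ)) *
          Complex.exp ((1 + Complex.I * (x : ℂ)) ^ (β : ℂ)))) / (1 - Complex.I * (x : ℂ))
        = (2 * (Real.pi : ℂ) * Complex.exp (-(2 : ℂ) ^ (β : ℂ)))⁻¹ *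
            gf β ((1 : ℂ) + (x : ℂ) * Complex.I) := by
      intro x
      have hne : (1 : ℂ) - Complex.I * (x : ℂ) ≠ 0 := by
        intro h
        have := congrArg Complex.re h
        simp at this
      have harg : (1 : ℂ) + (x : ℂ) * Complex.I = 1 + Complex.I * (x : ℂ) := by ring
      have hden : (2 : ℂ) - ((1 : ℂ) + (x : ℂ) * Complex.I) = 1 - Complex.I * (x : ℂ) := by
        ring
      rw [gf, hden, harg, Complex.exp_neg]
      have hE : Complex.exp ((1 + Complex.I * (x : ℂ)) ^ (β : ℂ)) ≠ 0 := Complex.exp_ne_zero _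
      have hEE : Complex.exp (-(1 + Complex.I * (x : ℂ)) ^ (β : ℂ)) *
          Complex.exp ((1 + Complex.I * (x : ℂ)) ^ (β : ℂ)) = 1 := by
        rw [← Complex.exp_add]
        simp
      field_simp
      linear_combination (-1 : ℂ) * hEE
    rw [funext hpt, MeasureTheory.integral_const_mul, phi1_value hβ0 hβ1]
    push_cast
    field_simp
end
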